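/- arXiv:1411.6317 — 7 statements merged into one kernel-verified Lean document; each statement's English description precedes it below -/
import Mathlib

section
/- For the function f(x) = (m/2 − ∑_{i=1}^m x_i)^2 − 1/4 on {0,1}^m with m odd, f is nonnegative on the cube, and there exists a degree-m pseudo-density D with E_x D(x) f(x) = −1/4. -/
/-- The real value of a Boolean cube coordinate (`{0,1}` encoding). -/
def bval (b : Bool) : ℝ := if b then 1 else 0

/-- Expectation over the uniform distribution on `{0,1}^m`. -/
noncomputable def cubeAvg (m : ℕ) (f : (Fin m → Bool) → ℝ) : ℝ :=
  (∑ x : Fin m → Bool, f x) / 2 ^ m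

/-- `g : {0,1}^m → ℝ` has (multilinear) degree at most `k`. -/
def HasDegLE (m k : ℕ) (g : (Fin m → Bool) → ℝ) : Prop :=
  ∃ c : Finset (Fin m) → ℝ, (∀ S : Finset (Fin m), k < S.card → c S = 0) ∧
    ∀ x, g x = ∑ S : Finset (Fin m), c S * ∏ i ∈ S, bval (x i)

/-- A degree-`d` pseudo-density on `{0,1}^m`: `E D = 1` and `E D·g² ≥ 0`
for every `g` of degree at most `d/2`. -/
def IsPseudoDensity (m d : ℕ) (D : (Fin m → Bool) → ℝ) : Prop :=
  cubeAvg m D = 1 ∧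
    ∀ g : (Fin m → Bool) → ℝ, HasDegLE m (d / 2) g →
      0 ≤ cubeAvg m (fun x => D x * g x ^ 2)

/-!
The density is `D x = 2^m λ_{|x|} / C(m, |x|)`, where `λ_k` are the Lagrange weights of the
nodes `0, …, m` at the point `m/2`. If `g` has degree `d`, its average over the weight-`k` slice
is a polynomial of degree `≤ d` in `k`, and `E[D g]` is the value of that polynomial at the
non-integer weight `m/2`. Hence `E D = 1` and `E[D f] = (m/2 - m/2)^2 - 1/4`, while `f ≥ 0` on
the cube because `m - 2|x|` is odd.

For positivity, write `g` of degree `t ≤ (m-1)/2` as a sum of products `q(|x|) h(x)`, where `h`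
is harmonic of degree `j` (its coefficients live on `j`-sets and are killed by the lowering
operator) and `deg q + j ≤ t`. The symmetric factors come out of `E[D ·]` as the scalars
`q(m/2)`, harmonics of different degrees are orthogonal on every slice, and for `h` harmonic of
degree `j` the slice-average polynomial of `h²` has degree `≤ 2j`, is nonnegative at `j` and
vanishes at the `2j` weights `k < j` and `k > m - j`; so it is nonnegative at `m/2`.
-/

namespace Knapsack

open Finset Polynomial

theorem card_filter_subset_mul_descFactorial {α : Type*} [DecidableEq α] {S t : Finset α}
    (hSt : S ⊆ t) (k : ℕ) :
    #{T ∈ powersetCard k t | S ⊆ T} * (#t).descFactorial #S =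
      (#t).choose k * k.descFactorial #S := by
  by_cases hSk : #S ≤ k
  · rw [card_filter_powersetCard_subset S t k hSt hSk]
    simp only [Nat.descFactorial_eq_factorial_mul_choose]
    have := Nat.choose_mul (n := #t) hSk
    calc (#t - #S).choose (k - #S) * ((#S).factorial * (#t).choose #S)
        = (#S).factorial * ((#t).choose #S * (#t - #S).choose (k - #S)) := by ring
      _ = (#t).choose k * ((#S).factorial * k.choose #S) := by rw [← this]; ring
  · have hempty : {T ∈ powersetCard k t | S ⊆ T} = ∅ := by
      refine filter_false_of_mem fun T hT hST => hSk ?_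
      exact (mem_powersetCard.mp hT).2 ▸ card_le_card hST
    rw [hempty, Nat.descFactorial_eq_zero_iff_lt.mpr (not_le.mp hSk)]
    simp

theorem sum_sum_compl_insert {α M : Type*} [Fintype α] [DecidableEq α] [AddCommMonoid M]
    (φ : Finset α → α → Finset α → M) :
    ∑ F, ∑ i ∈ Fᶜ, φ F i (insert i F) = ∑ A, ∑ i ∈ A, φ (A.erase i) i A := by
  rw [sum_comm' (t' := univ) (s' := fun i : α => ({F | i ∉ F} : Finset (Finset α))) (by simp),
    sum_comm' (t' := univ) (s' := fun i : α => ({A | i ∈ A} : Finset (Finset α))) (by simp)]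
  refine sum_congr rfl fun i _ => ?_
  refine sum_nbij' (insert i) (·.erase i) (by simp) (by simp) ?_ ?_ ?_ <;>
    simp +contextual [insert_erase]

theorem eval_mul_eval_eq_of_eval_eq_zero {R : Type*} [CommRing R] [IsDomain R] {P Q : R[X]}
    {s : Finset R} {a : R} (ha : a ∉ s) (hP : P.natDegree ≤ #s) (hQ : Q.natDegree ≤ #s)
    (hPs : ∀ r ∈ s, P.eval r = 0) (hQs : ∀ r ∈ s, Q.eval r = 0) (b : R) :
    Q.eval a * P.eval b = P.eval a * Q.eval b := by
  classical
  set D := C (Q.eval a) * P - C (P.eval a) * Q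
  have hD : D = 0 := by
    refine eq_zero_of_natDegree_lt_card_of_eval_eq_zero' D (insert a s) (fun r hr => ?_) ?_
    · rcases mem_insert.mp hr with rfl | hr
      · simp [D, mul_comm]
      · simp [D, hPs r hr, hQs r hr]
    · rw [card_insert_of_notMem ha]
      exact Nat.lt_succ_of_le ((natDegree_sub_le _ _).trans
        (max_le ((natDegree_C_mul_le _ _).trans hP) ((natDegree_C_mul_le _ _).trans hQ)))
  simpa [D, sub_eq_zero] using congrArg (eval b) hD

lemma eval_descPochhammer_mul_comp {m k : ℕ} (hk : k ≤ m) (j : ℕ) :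
    (descPochhammer ℝ j * (descPochhammer ℝ j).comp (C (m : ℝ) - X)).eval (k : ℝ) =
      k.descFactorial j * (m - k).descFactorial j := by
  rw [eval_mul, eval_comp, eval_sub, eval_C, eval_X, ← Nat.cast_sub hk,
    descPochhammer_eval_eq_descFactorial, descPochhammer_eval_eq_descFactorial]

/-- `W` is a nonnegative multiple of `X (X - 1) ⋯ (X - j + 1) · (m - X) ⋯ (m - j + 1 - X)`,
which is a square at `m / 2`. -/
theorem eval_div_two_nonneg {m j : ℕ} (hj : 2 * j < m) {W : ℝ[X]} (hW : W.natDegree ≤ 2 * j)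
    (hWzero : ∀ k ≤ m, k < j ∨ m - k < j → W.eval (k : ℝ) = 0)
    (hWj : 0 ≤ W.eval (j : ℝ)) :
    0 ≤ W.eval ((m : ℝ) / 2) := by
  set Z := descPochhammer ℝ j * (descPochhammer ℝ j).comp (C (m : ℝ) - X)
  have hZzero {k : ℕ} (hk : k ≤ m) (hkj : k < j ∨ m - k < j) : Z.eval (k : ℝ) = 0 := by
    rw [eval_descPochhammer_mul_comp hk]
    rcases hkj with hkj | hkj <;> simp [Nat.descFactorial_eq_zero_iff_lt.mpr hkj]
  set s : Finset ℝ := (range j ∪ Ioc (m - j) m).image Nat.cast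
  have hmem {r : ℝ} (hr : r ∈ s) : ∃ k ≤ m, (k < j ∨ m - k < j) ∧ r = k := by
    obtain ⟨k, hk, rfl⟩ := mem_image.mp hr
    simp only [mem_union, mem_range, mem_Ioc] at hk
    exact ⟨k, by omega, by omega, rfl⟩
  have hcard : #s = 2 * j := by
    rw [card_image_of_injective _ Nat.cast_injective, card_union_of_disjoint
      (disjoint_left.mpr fun k hk hk' => by simp only [mem_range, mem_Ioc] at hk hk'; omega),
      card_range, Nat.card_Ioc]
    omega
  have hjs : (j : ℝ) ∉ s := fun hj' => by
    obtain ⟨k, -, hk, hjk⟩ := hmem hj'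
    have := Nat.cast_injective hjk
    omega
  have hZdeg : Z.natDegree ≤ #s := by
    have hlin : (C (m : ℝ) - X).natDegree ≤ 1 := (natDegree_sub_le _ _).trans (by simp)
    have hcomp := natDegree_comp_le (p := descPochhammer ℝ j) (q := C (m : ℝ) - X)
    rw [descPochhammer_natDegree] at hcomp
    refine natDegree_mul_le.trans ?_
    rw [descPochhammer_natDegree, hcard]
    nlinarith
  have key := eval_mul_eval_eq_of_eval_eq_zero hjs (hW.trans hcard.ge) hZdeg
    (fun r hr => by obtain ⟨k, hk, hkj, rfl⟩ := hmem hr; exact hWzero k hk hkj)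
    (fun r hr => by obtain ⟨k, hk, hkj, rfl⟩ := hmem hr; exact hZzero hk hkj) ((m : ℝ) / 2)
  have hZj : 0 < Z.eval (j : ℝ) := by
    rw [eval_descPochhammer_mul_comp (by omega)]
    exact mul_pos (by exact_mod_cast Nat.descFactorial_pos.mpr le_rfl)
      (by exact_mod_cast Nat.descFactorial_pos.mpr (by omega))
  have hZhalf : 0 ≤ Z.eval ((m : ℝ) / 2) := by
    rw [eval_mul, eval_comp, eval_sub, eval_C, eval_X, show (m : ℝ) - m / 2 = m / 2 by ring]
    exact mul_self_nonneg _
  exact (mul_nonneg_iff_of_pos_left hZj).mp (key ▸ mul_nonneg hWj hZhalf)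

variable {m : ℕ}

/-! ### The cube and multilinear functions -/

def trueSet (x : Fin m → Bool) : Finset (Fin m) := {i | x i = true}

def ofFinset (S : Finset (Fin m)) : Fin m → Bool := fun i => decide (i ∈ S)

@[simp] lemma trueSet_ofFinset (S : Finset (Fin m)) : trueSet (ofFinset S) = S := by
  ext; simp [trueSet, ofFinset]

lemma ofFinset_trueSet (x : Fin m → Bool) : ofFinset (trueSet x) = x := by
  funext i; simp [trueSet, ofFinset]

def finsetEquivCube : Finset (Fin m) ≃ (Fin m → Bool) :=
  ⟨ofFinset, trueSet, trueSet_ofFinset, ofFinset_trueSet⟩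

def weight (x : Fin m → Bool) : ℕ := #(trueSet x)

@[simp] lemma weight_ofFinset (S : Finset (Fin m)) : weight (ofFinset S) = #S := by
  simp [weight]

lemma sum_bval_eq_weight (x : Fin m → Bool) : ∑ i, bval (x i) = weight x := by
  simp [weight, trueSet, bval, sum_boole]

lemma prod_bval_eq_ite (x : Fin m → Bool) (A : Finset (Fin m)) :
    ∏ i ∈ A, bval (x i) = if A ⊆ trueSet x then 1 else 0 := by
  simp [bval, prod_boole, subset_iff, trueSet]

lemma sum_cube_eq_sum_powersetCard (g : (Fin m → Bool) → ℝ) :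
    ∑ x, g x = ∑ k ∈ range (m + 1), ∑ S ∈ powersetCard k univ, g (ofFinset S) := by
  rw [← Fintype.sum_equiv finsetEquivCube (fun S => g (ofFinset S)) g fun _ => rfl,
    ← sum_fiberwise_of_maps_to (g := card) (t := range (m + 1))
      fun S _ => mem_range.mpr (Nat.lt_succ_of_le (by simpa using card_le_univ S))]
  refine sum_congr rfl fun k _ => ?_
  rw [powersetCard_eq_filter, powerset_univ]

noncomputable def multilinear (m : ℕ) :
    (Finset (Fin m) → ℝ) →ₗ[ℝ] (Fin m → Bool) → ℝ where
  toFun c x := ∑ A, c A * ∏ i ∈ A, bval (x i)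
  map_add' c c' := by ext x; simp [add_mul, sum_add_distrib]
  map_smul' a c := by ext x; simp [mul_sum, mul_assoc]

lemma multilinear_apply (c : Finset (Fin m) → ℝ) (x : Fin m → Bool) :
    multilinear m c x = ∑ A with A ⊆ trueSet x, c A := by
  simp [multilinear, prod_bval_eq_ite, sum_filter]

lemma _root_.HasDegLE.exists_eq_multilinear {k : ℕ} {g : (Fin m → Bool) → ℝ}
    (hg : HasDegLE m k g) :
    ∃ c, (∀ A, k < #A → c A = 0) ∧ g = multilinear m c := by
  obtain ⟨c, hc, hg⟩ := hg
  exact ⟨c, hc, funext hg⟩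

lemma hasDegLE_multilinear {k : ℕ} {c : Finset (Fin m) → ℝ} (hc : ∀ A, k < #A → c A = 0) :
    HasDegLE m k (multilinear m c) :=
  ⟨c, hc, fun _ => rfl⟩

lemma _root_.HasDegLE.mono {a b : ℕ} {g : (Fin m → Bool) → ℝ} (hg : HasDegLE m a g)
    (hab : a ≤ b) : HasDegLE m b g :=
  let ⟨c, hc, hgc⟩ := hg
  ⟨c, fun S hS => hc S (by omega), hgc⟩

noncomputable def unionConv (c c' : Finset (Fin m) → ℝ) (S : Finset (Fin m)) : ℝ :=
  ∑ A, ∑ B, if A ∪ B = S then c A * c' B else 0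

lemma sum_unionConv_mul (c c' F : Finset (Fin m) → ℝ) :
    ∑ S, unionConv c c' S * F S = ∑ A, ∑ B, c A * c' B * F (A ∪ B) := by
  simp only [unionConv, sum_mul, ite_mul, zero_mul]
  rw [sum_comm]
  refine sum_congr rfl fun A _ => ?_
  rw [sum_comm]
  exact sum_congr rfl fun B _ => by simp

lemma multilinear_mul (c c' : Finset (Fin m) → ℝ) :
    multilinear m c * multilinear m c' = multilinear m (unionConv c c') := by
  ext x
  have h := sum_unionConv_mul c c' fun S => if S ⊆ trueSet x then 1 else 0
  simp only [mul_ite, mul_one, mul_zero, ← sum_filter] at h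
  rw [Pi.mul_apply, multilinear_apply, multilinear_apply, multilinear_apply, h, sum_mul_sum]
  simp only [sum_filter, union_subset_iff]
  exact sum_congr rfl fun A _ => by split_ifs <;> simp_all

lemma _root_.HasDegLE.mul {a b : ℕ} {g g' : (Fin m → Bool) → ℝ} (hg : HasDegLE m a g)
    (hg' : HasDegLE m b g') : HasDegLE m (a + b) (g * g') := by
  obtain ⟨c, hc, rfl⟩ := hg.exists_eq_multilinear
  obtain ⟨c', hc', rfl⟩ := hg'.exists_eq_multilinear
  rw [multilinear_mul]
  refine hasDegLE_multilinear fun S hS => sum_eq_zero fun A _ => sum_eq_zero fun B _ => ?_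
  split_ifs with hAB
  · by_cases hA : a < #A
    · simp [hc A hA]
    by_cases hB : b < #B
    · simp [hc' B hB]
    have := card_union_le A B
    rw [hAB] at this
    omega
  · rfl

/-! ### Slice averages and the pseudo-expectation -/

noncomputable def sliceAvg (m k : ℕ) (g : (Fin m → Bool) → ℝ) : ℝ :=
  (∑ S ∈ powersetCard k univ, g (ofFinset S)) / m.choose k

lemma sliceAvg_multilinear {k : ℕ} (hk : k ≤ m) (c : Finset (Fin m) → ℝ) :
    sliceAvg m k (multilinear m c) =
      ∑ A, c A * ((k.descFactorial #A : ℝ) / m.descFactorial #A) := by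
  have hcount (A : Finset (Fin m)) :
      (#{T ∈ powersetCard k univ | A ⊆ T} : ℝ) =
        m.choose k * ((k.descFactorial #A : ℝ) / m.descFactorial #A) := by
    have hA : (m.descFactorial #A : ℝ) ≠ 0 := by
      exact_mod_cast (Nat.descFactorial_pos.mpr (by simpa using card_le_univ A)).ne'
    have := card_filter_subset_mul_descFactorial (subset_univ A) k
    rw [card_univ, Fintype.card_fin] at this
    rw [mul_div_assoc', eq_div_iff hA]
    exact_mod_cast this
  have hchoose : (m.choose k : ℝ) ≠ 0 := by exact_mod_cast (Nat.choose_pos hk).ne'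
  simp only [sliceAvg, multilinear_apply, trueSet_ofFinset, sum_filter]
  rw [sum_comm, div_eq_iff hchoose, sum_mul]
  refine sum_congr rfl fun A _ => ?_
  rw [← sum_filter, sum_const, nsmul_eq_mul, hcount]
  ring

lemma _root_.HasDegLE.exists_sliceAvg_eq_eval {d : ℕ} {g : (Fin m → Bool) → ℝ}
    (hg : HasDegLE m d g) :
    ∃ W : ℝ[X], W.natDegree ≤ d ∧ ∀ k ≤ m, sliceAvg m k g = W.eval (k : ℝ) := by
  obtain ⟨c, hc, rfl⟩ := hg.exists_eq_multilinear
  refine ⟨∑ A, C (c A / m.descFactorial #A) * descPochhammer ℝ #A, ?_, fun k hk => ?_⟩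
  · refine natDegree_sum_le_of_forall_le _ _ fun A _ => ?_
    by_cases hA : d < #A
    · simp [hc A hA]
    · exact (natDegree_C_mul_le _ _).trans ((descPochhammer_natDegree ℝ _).trans_le (by omega))
  · simp only [sliceAvg_multilinear hk, eval_finsetSum, eval_mul, eval_C,
      descPochhammer_eval_eq_descFactorial]
    exact sum_congr rfl fun A _ => by ring

lemma sliceAvg_eval_weight_mul (k : ℕ) (q : ℝ[X]) (g : (Fin m → Bool) → ℝ) :
    sliceAvg m k (fun x => q.eval (weight x : ℝ) * g x) = q.eval (k : ℝ) * sliceAvg m k g := by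
  rw [sliceAvg, sliceAvg, mul_div_assoc', mul_sum]
  congr 1
  exact sum_congr rfl fun S hS => by rw [weight_ofFinset, mem_powersetCard_univ.mp hS]

lemma sliceAvg_one {k : ℕ} (hk : k ≤ m) : sliceAvg m k (fun _ => 1) = 1 := by
  have : (m.choose k : ℝ) ≠ 0 := by exact_mod_cast (Nat.choose_pos hk).ne'
  simp [sliceAvg, this]

noncomputable def lagrangeWeight (m k : ℕ) : ℝ :=
  (Lagrange.basis (range (m + 1)) (fun i : ℕ => (i : ℝ)) k).eval ((m : ℝ) / 2)

lemma sum_lagrangeWeight_mul_eval {W : ℝ[X]} (hW : W.natDegree ≤ m) :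
    ∑ k ∈ range (m + 1), lagrangeWeight m k * W.eval (k : ℝ) = W.eval ((m : ℝ) / 2) := by
  have hinj : Set.InjOn (fun i : ℕ => (i : ℝ)) ↑(range (m + 1)) :=
    fun a _ b _ h => Nat.cast_injective h
  have hdeg : W.degree < #(range (m + 1)) := by
    rw [card_range]
    exact degree_le_natDegree.trans_lt (by exact_mod_cast Nat.lt_succ_of_le hW)
  conv_rhs => rw [Lagrange.eq_interpolate hinj hdeg, Lagrange.interpolate_apply, eval_finsetSum]
  exact sum_congr rfl fun k _ => by rw [eval_mul, eval_C, lagrangeWeight, mul_comm]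

noncomputable def pseudoDensity (m : ℕ) (x : Fin m → Bool) : ℝ :=
  2 ^ m * lagrangeWeight m (weight x) / m.choose (weight x)

noncomputable def pseudoExpect (m : ℕ) : ((Fin m → Bool) → ℝ) →ₗ[ℝ] ℝ where
  toFun g := ∑ k ∈ range (m + 1), lagrangeWeight m k * sliceAvg m k g
  map_add' g g' := by simp [sliceAvg, sum_add_distrib, add_div, mul_add]
  map_smul' a g := by
    simp only [sliceAvg, Pi.smul_apply, smul_eq_mul, RingHom.id_apply, mul_sum (s := range _)]
    exact sum_congr rfl fun k _ => by rw [← mul_sum]; ring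

lemma pseudoExpect_apply (g : (Fin m → Bool) → ℝ) :
    pseudoExpect m g = ∑ k ∈ range (m + 1), lagrangeWeight m k * sliceAvg m k g :=
  rfl

lemma cubeAvg_pseudoDensity_mul (g : (Fin m → Bool) → ℝ) :
    cubeAvg m (fun x => pseudoDensity m x * g x) = pseudoExpect m g := by
  rw [cubeAvg, sum_cube_eq_sum_powersetCard, sum_div, pseudoExpect_apply]
  refine sum_congr rfl fun k _ => ?_
  have hD : ∀ S ∈ powersetCard k univ, pseudoDensity m (ofFinset S) * g (ofFinset S) =
      2 ^ m * lagrangeWeight m k / m.choose k * g (ofFinset S) := fun S hS => by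
    rw [pseudoDensity, weight_ofFinset, mem_powersetCard_univ.mp hS]
  rw [sum_congr rfl hD, ← mul_sum, sliceAvg]
  field_simp

lemma pseudoExpect_eq_eval {g : (Fin m → Bool) → ℝ} {W : ℝ[X]} (hW : W.natDegree ≤ m)
    (hg : ∀ k ≤ m, sliceAvg m k g = W.eval (k : ℝ)) :
    pseudoExpect m g = W.eval ((m : ℝ) / 2) := by
  rw [pseudoExpect_apply, ← sum_lagrangeWeight_mul_eval hW]
  exact sum_congr rfl fun k hk => by rw [hg k (Nat.lt_succ_iff.mp (mem_range.mp hk))]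

lemma pseudoExpect_eval_weight {q : ℝ[X]} (hq : q.natDegree ≤ m) :
    pseudoExpect m (fun x => q.eval (weight x : ℝ)) = q.eval ((m : ℝ) / 2) :=
  pseudoExpect_eq_eval hq fun k hk => by
    simpa [sliceAvg_one hk] using sliceAvg_eval_weight_mul (m := m) k q (fun _ => 1)

lemma pseudoExpect_eval_weight_mul {d : ℕ} {g : (Fin m → Bool) → ℝ} (hg : HasDegLE m d g)
    {q : ℝ[X]} (hq : q.natDegree + d ≤ m) :
    pseudoExpect m (fun x => q.eval (weight x : ℝ) * g x) =
      q.eval ((m : ℝ) / 2) * pseudoExpect m g := by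
  obtain ⟨W, hW, hgW⟩ := hg.exists_sliceAvg_eq_eval
  rw [pseudoExpect_eq_eval (W := q * W) (natDegree_mul_le.trans (by omega))
      fun k hk => by rw [sliceAvg_eval_weight_mul, hgW k hk, eval_mul],
    pseudoExpect_eq_eval (by omega) hgW, eval_mul]

/-! ### Harmonic coefficient functions -/

def homogeneous (m j : ℕ) : Submodule ℝ (Finset (Fin m) → ℝ) where
  carrier := {c | ∀ A, #A ≠ j → c A = 0}
  add_mem' hc hc' A hA := by simp [hc A hA, hc' A hA]
  zero_mem' _ _ := rfl
  smul_mem' a c hc A hA := by simp [hc A hA]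

lemma hasDegLE_multilinear_of_mem_homogeneous {j : ℕ} {c : Finset (Fin m) → ℝ}
    (hc : c ∈ homogeneous m j) : HasDegLE m j (multilinear m c) :=
  hasDegLE_multilinear fun A hA => hc A (by omega)

noncomputable def raise (m : ℕ) :
    (Finset (Fin m) → ℝ) →ₗ[ℝ] Finset (Fin m) → ℝ where
  toFun b A := ∑ i ∈ A, b (A.erase i)
  map_add' b b' := by ext A; simp [sum_add_distrib]
  map_smul' a b := by ext A; simp [mul_sum]

noncomputable def lower (m : ℕ) :
    (Finset (Fin m) → ℝ) →ₗ[ℝ] Finset (Fin m) → ℝ where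
  toFun c F := ∑ i ∈ Fᶜ, c (insert i F)
  map_add' c c' := by ext F; simp [sum_add_distrib]
  map_smul' a c := by ext F; simp [mul_sum]

lemma raise_apply (b : Finset (Fin m) → ℝ) (A : Finset (Fin m)) :
    raise m b A = ∑ i ∈ A, b (A.erase i) :=
  rfl

lemma lower_apply (c : Finset (Fin m) → ℝ) (F : Finset (Fin m)) :
    lower m c F = ∑ i ∈ Fᶜ, c (insert i F) :=
  rfl

lemma sum_raise_mul (b c : Finset (Fin m) → ℝ) :
    ∑ A, raise m b A * c A = ∑ F, b F * lower m c F := by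
  simp only [raise_apply, lower_apply, sum_mul, mul_sum]
  exact (sum_sum_compl_insert fun F _ A => b F * c A).symm

noncomputable def harmonic (m j : ℕ) : Submodule ℝ (Finset (Fin m) → ℝ) :=
  homogeneous m j ⊓ LinearMap.ker (lower m)

lemma homogeneous_of_mem_harmonic {j : ℕ} {h : Finset (Fin m) → ℝ} (hh : h ∈ harmonic m j) :
    h ∈ homogeneous m j :=
  hh.1

lemma lower_eq_zero_of_mem_harmonic {j : ℕ} {h : Finset (Fin m) → ℝ}
    (hh : h ∈ harmonic m j) :
    lower m h = 0 :=
  hh.2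

noncomputable def supersetSum (c : Finset (Fin m) → ℝ) (B : Finset (Fin m)) : ℝ :=
  ∑ A with B ⊆ A, c A

lemma supersetSum_lower (c : Finset (Fin m) → ℝ) (B : Finset (Fin m)) :
    supersetSum (lower m c) B = ∑ A with B ⊆ A, ((#A : ℝ) - #B) * c A := by
  have hcount (A : Finset (Fin m)) : ∑ i ∈ A, (if B ⊆ A.erase i then c A else 0) =
      if B ⊆ A then ((#A : ℝ) - #B) * c A else 0 := by
    simp only [subset_erase, ← sum_filter]
    split_ifs with hBA
    · have hfilter : ({i ∈ A | B ⊆ A ∧ i ∉ B} : Finset _) = A \ B := by ext; simp [hBA]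
      rw [sum_const, nsmul_eq_mul, hfilter, card_sdiff_of_subset hBA,
        Nat.cast_sub (card_le_card hBA)]
    · simp [hBA]
  calc supersetSum (lower m c) B
      = ∑ F, ∑ i ∈ Fᶜ, if B ⊆ F then c (insert i F) else 0 := by
        rw [supersetSum, sum_filter]
        exact sum_congr rfl fun F _ => by split_ifs <;> simp [lower_apply]
    _ = ∑ A, ∑ i ∈ A, if B ⊆ A.erase i then c A else 0 :=
        sum_sum_compl_insert fun F _ A => if B ⊆ F then c A else 0
    _ = _ := by rw [sum_filter]; exact sum_congr rfl fun A _ => hcount A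

lemma supersetSum_eq_zero {j : ℕ} {h : Finset (Fin m) → ℝ} (hh : h ∈ harmonic m j)
    {B : Finset (Fin m)} (hB : #B < j) : supersetSum h B = 0 := by
  have hlevel :
      ∑ A with B ⊆ A, ((#A : ℝ) - #B) * h A = ((j : ℝ) - #B) * supersetSum h B := by
    rw [supersetSum, mul_sum]
    refine sum_congr rfl fun A _ => ?_
    by_cases hA : #A = j
    · rw [hA]
    · rw [homogeneous_of_mem_harmonic hh A hA, mul_zero, mul_zero]
  have hj : (j : ℝ) - #B ≠ 0 := sub_ne_zero.mpr (by exact_mod_cast hB.ne')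
  have := supersetSum_lower h B
  rw [lower_eq_zero_of_mem_harmonic hh, hlevel] at this
  simpa [supersetSum, hj] using this.symm

lemma ite_inter_eq_eq_sum {A B T : Finset (Fin m)} (hT : T ⊆ A) :
    (if A ∩ B = T then (1 : ℝ) else 0) =
      ∑ U ∈ (A \ T).powerset, (-1) ^ #U * if T ∪ U ⊆ B then 1 else 0 := by
  simp only [mul_ite, mul_one, mul_zero, ← sum_filter]
  by_cases hTB : T ⊆ B
  · have hfilter : {U ∈ (A \ T).powerset | T ∪ U ⊆ B} = ((A \ T) ∩ B).powerset := by
      ext U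
      simp only [mem_filter, mem_powerset, union_subset_iff, hTB, true_and, subset_inter_iff]
    have hinter : A ∩ B = T ↔ (A \ T) ∩ B = ∅ := by
      simp only [Finset.ext_iff, mem_inter, mem_sdiff, notMem_empty, iff_false]
      exact ⟨fun h x ⟨⟨hx, hxT⟩, hxB⟩ => hxT ((h x).mp ⟨hx, hxB⟩),
        fun h x => ⟨fun ⟨hx, hxB⟩ => by_contra fun hxT => h x ⟨⟨hx, hxT⟩, hxB⟩,
          fun hxT => ⟨hT hxT, hTB hxT⟩⟩⟩
    have hsum : ∑ U ∈ ((A \ T) ∩ B).powerset, ((-1) ^ #U : ℝ) =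
        if (A \ T) ∩ B = ∅ then 1 else 0 := by exact_mod_cast sum_powerset_neg_one_pow_card
    rw [hfilter, hsum]
    exact if_congr hinter rfl rfl
  · rw [if_neg fun (h : A ∩ B = T) => hTB (h ▸ inter_subset_right),
      filter_false_of_mem fun U _ hU => hTB (subset_union_left.trans hU), sum_empty]

lemma sum_mul_inter_eq_zero {j : ℕ} {h : Finset (Fin m) → ℝ} (hh : h ∈ harmonic m j)
    {A : Finset (Fin m)} (hA : #A < j) (ψ : Finset (Fin m) → ℝ) :
    ∑ B, h B * ψ (A ∩ B) = 0 := by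
  have hψ (B : Finset (Fin m)) : ψ (A ∩ B) = ∑ T ∈ A.powerset, ψ T *
      ∑ U ∈ (A \ T).powerset, (-1) ^ #U * if T ∪ U ⊆ B then 1 else 0 := by
    rw [sum_congr rfl fun T hT => by rw [← ite_inter_eq_eq_sum (mem_powerset.mp hT)]]
    simp [mul_ite, inter_subset_left]
  simp_rw [hψ, mul_sum]
  rw [sum_comm]
  refine sum_eq_zero fun T hT => ?_
  rw [sum_comm]
  refine sum_eq_zero fun U hU => ?_
  have hTU : #(T ∪ U) < j := (card_le_card (union_subset (mem_powerset.mp hT)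
    ((mem_powerset.mp hU).trans sdiff_subset))).trans_lt hA
  simp only [mul_ite, mul_one, mul_zero, ← sum_filter, ← sum_mul]
  rw [← supersetSum, supersetSum_eq_zero hh hTU, zero_mul]

lemma multilinear_eq_zero_of_weight_lt {j : ℕ} {c : Finset (Fin m) → ℝ}
    (hc : c ∈ homogeneous m j) {x : Fin m → Bool} (hx : weight x < j) :
    multilinear m c x = 0 := by
  rw [multilinear_apply]
  refine sum_eq_zero fun A hA => hc A fun hAj => ?_
  have := card_le_card (mem_filter.mp hA).2
  rw [weight] at hx
  omega

lemma multilinear_eq_zero_of_lt_weight {j : ℕ} {h : Finset (Fin m) → ℝ}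
    (hh : h ∈ harmonic m j) {x : Fin m → Bool} (hx : m - weight x < j) :
    multilinear m h x = 0 := by
  rw [multilinear_apply, sum_filter]
  refine (sum_congr rfl fun A _ => ?_).trans <| sum_mul_inter_eq_zero hh (A := (trueSet x)ᶜ)
    (by rwa [card_compl, Fintype.card_fin]) fun T => if T = ∅ then 1 else 0
  have : (trueSet x)ᶜ ∩ A = ∅ ↔ A ⊆ trueSet x := by
    rw [← disjoint_iff_inter_eq_empty, disjoint_compl_left_iff]
  simp [this]

lemma sliceAvg_multilinear_mul_eq_zero {j j' : ℕ} {h h' : Finset (Fin m) → ℝ}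
    (hh : h ∈ harmonic m j) (hh' : h' ∈ harmonic m j') (hjj : j < j') {k : ℕ} (hk : k ≤ m) :
    sliceAvg m k (multilinear m h * multilinear m h') = 0 := by
  set φ : ℕ → ℝ := fun r => (k.descFactorial r : ℝ) / m.descFactorial r
  rw [multilinear_mul, sliceAvg_multilinear hk, sum_unionConv_mul h h' fun S => φ #S]
  refine sum_eq_zero fun A _ => ?_
  by_cases hA : #A = j
  · have hunion (B : Finset (Fin m)) :
        h' B * φ #(A ∪ B) = h' B * φ (#A + j' - #(A ∩ B)) := by
      by_cases hB : #B = j'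
      · have := card_union_add_card_inter A B
        rw [show #(A ∪ B) = #A + j' - #(A ∩ B) by omega]
      · rw [homogeneous_of_mem_harmonic hh' B hB, zero_mul, zero_mul]
    calc ∑ B, h A * h' B * φ #(A ∪ B) = h A * ∑ B, h' B * φ (#A + j' - #(A ∩ B)) := by
          rw [mul_sum]
          exact sum_congr rfl fun B _ => by rw [mul_assoc, hunion]
      _ = 0 := by
          rw [sum_mul_inter_eq_zero hh' (by omega) fun T => φ (#A + j' - #T), mul_zero]
  · simp [homogeneous_of_mem_harmonic hh A hA]

lemma pseudoExpect_multilinear_mul_eq_zero {j j' : ℕ} {h h' : Finset (Fin m) → ℝ}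
    (hh : h ∈ harmonic m j) (hh' : h' ∈ harmonic m j') (hjj : j ≠ j') :
    pseudoExpect m (multilinear m h * multilinear m h') = 0 := by
  wlog hlt : j < j' generalizing j j' h h'
  · rw [mul_comm]
    exact this hh' hh hjj.symm (by omega)
  rw [pseudoExpect_apply]
  refine sum_eq_zero fun k hk => ?_
  rw [sliceAvg_multilinear_mul_eq_zero hh hh' hlt (Nat.lt_succ_iff.mp (mem_range.mp hk)), mul_zero]

lemma pseudoExpect_multilinear_mul_self_nonneg {j : ℕ} {h : Finset (Fin m) → ℝ}
    (hh : h ∈ harmonic m j) (hj : 2 * j < m) :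
    0 ≤ pseudoExpect m (multilinear m h * multilinear m h) := by
  have hdeg := hasDegLE_multilinear_of_mem_homogeneous (homogeneous_of_mem_harmonic hh)
  obtain ⟨W, hW, hWslice⟩ := (hdeg.mul hdeg).exists_sliceAvg_eq_eval
  have hWzero (k : ℕ) (hk : k ≤ m) (hkj : k < j ∨ m - k < j) : W.eval (k : ℝ) = 0 := by
    rw [← hWslice k hk, sliceAvg, div_eq_zero_iff]
    refine Or.inl (sum_eq_zero fun S hS => ?_)
    have hwS : weight (ofFinset S) = k := by simp [mem_powersetCard_univ.mp hS]
    rw [Pi.mul_apply]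
    rcases hkj with hkj | hkj
    · rw [multilinear_eq_zero_of_weight_lt (homogeneous_of_mem_harmonic hh) (hwS ▸ hkj),
        zero_mul]
    · rw [multilinear_eq_zero_of_lt_weight hh (hwS ▸ hkj), zero_mul]
  rw [pseudoExpect_eq_eval (hW.trans (by omega)) hWslice]
  refine eval_div_two_nonneg hj (by omega) hWzero ?_
  rw [← hWslice j (by omega)]
  exact div_nonneg (sum_nonneg fun _ _ => mul_self_nonneg _) (Nat.cast_nonneg _)

/-! ### Decomposition into harmonic parts -/

def homogeneousPart (d : ℕ) (c : Finset (Fin m) → ℝ) (A : Finset (Fin m)) : ℝ :=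
  if #A = d then c A else 0

lemma homogeneousPart_mem (d : ℕ) (c : Finset (Fin m) → ℝ) :
    homogeneousPart d c ∈ homogeneous m d :=
  fun _ hA => if_neg hA

lemma homogeneousPart_eq_self {d : ℕ} {c : Finset (Fin m) → ℝ} (hc : c ∈ homogeneous m d) :
    homogeneousPart d c = c := by
  funext A
  by_cases hA : #A = d
  · exact if_pos hA
  · rw [homogeneousPart, if_neg hA, hc A hA]

lemma raise_homogeneousPart (d : ℕ) (b : Finset (Fin m) → ℝ) :
    raise m (homogeneousPart d b) = homogeneousPart (d + 1) (raise m b) := by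
  funext A
  simp only [raise_apply, homogeneousPart]
  by_cases hA : #A = d + 1
  · rw [if_pos hA]
    exact sum_congr rfl fun i hi => if_pos (by rw [card_erase_of_mem hi]; omega)
  · rw [if_neg hA]
    exact sum_eq_zero fun i hi => if_neg <| by
      rw [card_erase_of_mem hi]
      have := card_pos.mpr ⟨i, hi⟩
      omega

lemma lower_homogeneousPart (d : ℕ) (c : Finset (Fin m) → ℝ) :
    lower m (homogeneousPart (d + 1) c) = homogeneousPart d (lower m c) := by
  funext F
  simp only [lower_apply, homogeneousPart]
  by_cases hF : #F = d
  · rw [if_pos hF]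
    exact sum_congr rfl fun i hi => if_pos (by rw [card_insert_of_notMem (mem_compl.mp hi)]; omega)
  · rw [if_neg hF]
    exact sum_eq_zero fun i hi => if_neg (by rw [card_insert_of_notMem (mem_compl.mp hi)]; omega)

-- `lower` is the adjoint of `raise`, so this is the orthogonal decomposition along `range raise`.
lemma exists_eq_raise_add_of_lower_eq_zero (c : Finset (Fin m) → ℝ) :
    ∃ b w, lower m w = 0 ∧ c = raise m b + w := by
  let e := WithLp.linearEquiv 2 ℝ (Finset (Fin m) → ℝ)
  let K : Submodule ℝ (EuclideanSpace ℝ (Finset (Fin m))) :=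
    (LinearMap.range (raise m)).comap e.toLinearMap
  obtain ⟨y, ⟨b, hb⟩, z, hz, hyz⟩ := K.exists_add_mem_mem_orthogonal (e.symm c)
  refine ⟨b, e z, ?_, ?_⟩
  · have horth (b' : Finset (Fin m) → ℝ) : ∑ F, b' F * lower m (e z) F = 0 := by
      have := (Submodule.mem_orthogonal K z).mp hz (e.symm (raise m b')) ⟨b', by simp⟩
      rw [← sum_raise_mul, ← this, PiLp.inner_apply]
      exact sum_congr rfl fun A _ => by simp [e, mul_comm]
    have hsq := (sum_eq_zero_iff_of_nonneg fun F _ => mul_self_nonneg _).mp (horth (lower m (e z)))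
    exact funext fun F => mul_self_eq_zero.mp (hsq F (mem_univ F))
  · rw [hb]
    simpa using congrArg e hyz

lemma exists_harmonic_add_raise {d : ℕ} {c : Finset (Fin m) → ℝ}
    (hc : c ∈ homogeneous m (d + 1)) :
    ∃ h ∈ harmonic m (d + 1), ∃ b ∈ homogeneous m d, c = h + raise m b := by
  obtain ⟨b, w, hw, rfl⟩ := exists_eq_raise_add_of_lower_eq_zero c
  refine ⟨homogeneousPart (d + 1) w,
    Submodule.mem_inf.mpr ⟨homogeneousPart_mem _ _, LinearMap.mem_ker.mpr ?_⟩,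
    homogeneousPart d b, homogeneousPart_mem _ _, ?_⟩
  · rw [lower_homogeneousPart, hw]
    exact homogeneousPart_eq_self (zero_mem _)
  · rw [raise_homogeneousPart, ← homogeneousPart_eq_self hc]
    funext A
    simp only [homogeneousPart, Pi.add_apply]
    split_ifs <;> ring

lemma multilinear_raise {e : ℕ} {b : Finset (Fin m) → ℝ} (hb : b ∈ homogeneous m e)
    (x : Fin m → Bool) :
    multilinear m (raise m b) x = ((weight x : ℝ) - e) * multilinear m b x := by
  have hcount (F : Finset (Fin m)) : ∑ i ∈ Fᶜ, (if insert i F ⊆ trueSet x then b F else 0) =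
      if F ⊆ trueSet x then ((weight x : ℝ) - e) * b F else 0 := by
    simp only [insert_subset_iff, ← sum_filter]
    split_ifs with hF
    · have hfilter : {i ∈ Fᶜ | i ∈ trueSet x ∧ F ⊆ trueSet x} = trueSet x \ F := by
        ext; simp [hF, and_comm]
      rw [sum_const, nsmul_eq_mul, hfilter, card_sdiff_of_subset hF,
        Nat.cast_sub (card_le_card hF), weight]
      by_cases hFe : #F = e
      · rw [hFe]
      · rw [hb F hFe, mul_zero, mul_zero]
    · simp [hF]
  calc multilinear m (raise m b) x
      = ∑ A, ∑ i ∈ A, if A ⊆ trueSet x then b (A.erase i) else 0 := by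
        rw [multilinear_apply, sum_filter]
        exact sum_congr rfl fun A _ => by split_ifs <;> simp [raise_apply]
    _ = ∑ F, ∑ i ∈ Fᶜ, if insert i F ⊆ trueSet x then b F else 0 :=
        (sum_sum_compl_insert fun F _ A => if A ⊆ trueSet x then b F else 0).symm
    _ = _ := by
        rw [multilinear_apply, mul_sum, sum_filter]
        exact sum_congr rfl fun F _ => hcount F

noncomputable def harmonicSpan (m t : ℕ) : Submodule ℝ ((Fin m → Bool) → ℝ) :=
  Submodule.span ℝ {g | ∃ (j : ℕ) (q : ℝ[X]) (h : Finset (Fin m) → ℝ),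
    h ∈ harmonic m j ∧ q.natDegree + j ≤ t ∧
      g = fun x => q.eval (weight x : ℝ) * multilinear m h x}

lemma harmonicSpan_mono {t t' : ℕ} (htt : t ≤ t') : harmonicSpan m t ≤ harmonicSpan m t' :=
  Submodule.span_mono fun _ ⟨j, q, h, hh, hq, hg⟩ => ⟨j, q, h, hh, hq.trans htt, hg⟩

lemma multilinear_mem_harmonicSpan {j t : ℕ} {h : Finset (Fin m) → ℝ}
    (hh : h ∈ harmonic m j) (hjt : j ≤ t) : multilinear m h ∈ harmonicSpan m t :=
  Submodule.subset_span ⟨j, 1, h, hh, by simpa using hjt, by simp⟩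

lemma weight_sub_mul_mem_harmonicSpan {t : ℕ} {g : (Fin m → Bool) → ℝ}
    (hg : g ∈ harmonicSpan m t) (a : ℝ) :
    (fun x => ((weight x : ℝ) - a) * g x) ∈ harmonicSpan m (t + 1) := by
  induction hg using Submodule.span_induction with
  | mem g hg =>
    obtain ⟨j, q, h, hh, hq, rfl⟩ := hg
    refine Submodule.subset_span ⟨j, (X - C a) * q, h, hh, ?_, ?_⟩
    · have := natDegree_mul_le (p := X - C a) (q := q)
      rw [natDegree_X_sub_C] at this
      omega
    · funext x
      simp [mul_assoc]
  | zero =>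
    convert zero_mem (harmonicSpan m (t + 1)) using 1
    funext x
    simp
  | add g g' _ _ hg hg' =>
    convert add_mem hg hg' using 1
    funext x
    simp [mul_add]
  | smul r g _ hg =>
    convert Submodule.smul_mem _ r hg using 1
    funext x
    simp [mul_left_comm]

lemma multilinear_mem_harmonicSpan_of_mem_homogeneous {d : ℕ} {c : Finset (Fin m) → ℝ}
    (hc : c ∈ homogeneous m d) : multilinear m c ∈ harmonicSpan m d := by
  induction d generalizing c with
  | zero =>
    have hlower : lower m c = 0 := funext fun F =>
      sum_eq_zero fun i hi => hc _ (by rw [card_insert_of_notMem (mem_compl.mp hi)]; omega)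
    exact multilinear_mem_harmonicSpan (Submodule.mem_inf.mpr ⟨hc, hlower⟩) le_rfl
  | succ d ih =>
    obtain ⟨h, hh, b, hb, rfl⟩ := exists_harmonic_add_raise hc
    rw [map_add]
    refine add_mem (multilinear_mem_harmonicSpan hh le_rfl) ?_
    convert weight_sub_mul_mem_harmonicSpan (ih hb) d using 1
    exact funext (multilinear_raise hb)

lemma _root_.HasDegLE.mem_harmonicSpan {t : ℕ} {g : (Fin m → Bool) → ℝ}
    (hg : HasDegLE m t g) :
    g ∈ harmonicSpan m t := by
  obtain ⟨c, hc, rfl⟩ := hg.exists_eq_multilinear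
  have hsum : c = ∑ d ∈ range (t + 1), homogeneousPart d c := by
    funext A
    simp only [Finset.sum_apply, homogeneousPart]
    rw [sum_ite_eq]
    split_ifs with hA
    · rfl
    · exact hc A (by simpa using hA)
  rw [hsum, map_sum]
  exact Submodule.sum_mem _ fun d hd => harmonicSpan_mono (Nat.lt_succ_iff.mp (mem_range.mp hd))
    (multilinear_mem_harmonicSpan_of_mem_homogeneous (homogeneousPart_mem d c))

lemma exists_harmonic_of_mem_harmonicSpan {t : ℕ} (ht : t ≤ m) {g : (Fin m → Bool) → ℝ}
    (hg : g ∈ harmonicSpan m t) :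
    ∃ u : ℕ → Finset (Fin m) → ℝ, (∀ j, u j ∈ harmonic m j) ∧
      ∀ G, HasDegLE m (m - t) G → pseudoExpect m (g * G) =
        ∑ j ∈ range (t + 1), pseudoExpect m (multilinear m (u j) * G) := by
  induction hg using Submodule.span_induction with
  | mem g hg =>
    obtain ⟨j, q, h, hh, hq, rfl⟩ := hg
    refine ⟨fun j' => if j' = j then q.eval ((m : ℝ) / 2) • h else 0, fun j' => ?_,
      fun G hG => ?_⟩
    · dsimp only
      split_ifs with hj
      · exact hj ▸ Submodule.smul_mem _ _ hh
      · exact zero_mem _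
    · have hgG : (fun x => q.eval (weight x : ℝ) * multilinear m h x) * G =
          fun x => q.eval (weight x : ℝ) * (multilinear m h * G) x := by
        funext x
        simp [mul_assoc]
      rw [hgG, pseudoExpect_eval_weight_mul
        ((hasDegLE_multilinear_of_mem_homogeneous (homogeneous_of_mem_harmonic hh)).mul hG)
        (by omega)]
      rw [sum_eq_single_of_mem j (mem_range.mpr (by omega)) fun j' _ hj' => by simp [hj']]
      simp
  | zero => exact ⟨0, fun _ => zero_mem _, fun G _ => by simp⟩
  | add g g' _ _ ih ih' =>
    obtain ⟨u, hu, hgu⟩ := ih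
    obtain ⟨u', hu', hgu'⟩ := ih'
    exact ⟨u + u', fun j => add_mem (hu j) (hu' j), fun G hG => by
      simp [add_mul, hgu G hG, hgu' G hG, sum_add_distrib]⟩
  | smul a g _ ih =>
    obtain ⟨u, hu, hgu⟩ := ih
    exact ⟨a • u, fun j => Submodule.smul_mem _ a (hu j), fun G hG => by
      simp [hgu G hG, mul_sum]⟩

/-! ### Properties of the pseudo-density -/

theorem pseudoExpect_mul_self_nonneg {t : ℕ} (ht : 2 * t < m) {g : (Fin m → Bool) → ℝ}
    (hg : HasDegLE m t g) : 0 ≤ pseudoExpect m (g * g) := by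
  obtain ⟨u, hu, hgu⟩ := exists_harmonic_of_mem_harmonicSpan (by omega) hg.mem_harmonicSpan
  have hdeg {j : ℕ} (hj : j ∈ range (t + 1)) : HasDegLE m (m - t) (multilinear m (u j)) :=
    (hasDegLE_multilinear_of_mem_homogeneous (homogeneous_of_mem_harmonic (hu j))).mono
      (by simp only [mem_range] at hj; omega)
  calc 0 ≤ ∑ j ∈ range (t + 1), pseudoExpect m (multilinear m (u j) * multilinear m (u j)) :=
        sum_nonneg fun j hj => pseudoExpect_multilinear_mul_self_nonneg (hu j)
          (by simp only [mem_range] at hj; omega)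
    _ = ∑ j ∈ range (t + 1), ∑ j' ∈ range (t + 1),
          pseudoExpect m (multilinear m (u j') * multilinear m (u j)) :=
        sum_congr rfl fun j hj => (sum_eq_single_of_mem j hj fun j' _ hjj =>
          pseudoExpect_multilinear_mul_eq_zero (hu j') (hu j) hjj).symm
    _ = ∑ j ∈ range (t + 1), pseudoExpect m (multilinear m (u j) * g) :=
        sum_congr rfl fun j hj => by rw [mul_comm, hgu _ (hdeg hj)]
    _ = pseudoExpect m (g * g) := (hgu g (hg.mono (by omega))).symm

lemma cubeAvg_pseudoDensity : cubeAvg m (pseudoDensity m) = 1 := by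
  have h := cubeAvg_pseudoDensity_mul (m := m) fun _ => 1
  simp only [mul_one] at h
  rw [h]
  simpa using pseudoExpect_eval_weight (m := m) (q := 1) (by simp)

lemma isPseudoDensity_pseudoDensity (hm : Odd m) : IsPseudoDensity m m (pseudoDensity m) := by
  refine ⟨cubeAvg_pseudoDensity, fun g hg => ?_⟩
  have := Nat.two_mul_odd_div_two (Nat.odd_iff.mp hm)
  have := hm.pos
  rw [cubeAvg_pseudoDensity_mul]
  convert pseudoExpect_mul_self_nonneg (by omega) hg using 2
  funext x
  simp [sq]

lemma one_fourth_le_sq_half_sub (hm : Odd m) (w : ℕ) : 1 / 4 ≤ ((m : ℝ) / 2 - w) ^ 2 := by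
  have hz : (m : ℤ) - 2 * w ≠ 0 := by obtain ⟨l, rfl⟩ := hm; omega
  have : (1 : ℝ) ≤ ((m : ℝ) - 2 * w) ^ 2 := by
    exact_mod_cast (one_le_sq_iff_one_le_abs _).mpr (Int.one_le_abs hz)
  nlinarith

lemma cubeAvg_pseudoDensity_mul_sq_half_sub_weight (hm : 2 ≤ m) :
    cubeAvg m (fun x => pseudoDensity m x * (((m : ℝ) / 2 - weight x) ^ 2 - 1 / 4)) =
      -(1 / 4) := by
  have hdeg : ((C ((m : ℝ) / 2) - X) ^ 2 - C (1 / 4)).natDegree ≤ m := by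
    compute_degree
    omega
  simpa using (cubeAvg_pseudoDensity_mul _).trans (pseudoExpect_eval_weight hdeg)

end Knapsack

/-- For odd `m ≥ 3`, the function `f(x) = (m/2 − ∑_i x_i)² − 1/4` is
nonnegative on `{0,1}^m`, and there is a degree-`m` pseudo-density `D` with
`E_x D(x)·f(x) = −1/4`. -/
theorem stmt4 (m : ℕ) (hm : Odd m) (hm3 : 3 ≤ m)
    (f : (Fin m → Bool) → ℝ)
    (hf : ∀ x, f x = ((m : ℝ) / 2 - ∑ i : Fin m, bval (x i)) ^ 2 - 1 / 4) :
    (∀ x, 0 ≤ f x) ∧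
      ∃ D : (Fin m → Bool) → ℝ,
        IsPseudoDensity m m D ∧ cubeAvg m (fun x => D x * f x) = -(1 / 4) := by
  obtain rfl : f = fun x => ((m : ℝ) / 2 - Knapsack.weight x) ^ 2 - 1 / 4 :=
    funext fun x => by rw [hf, Knapsack.sum_bval_eq_weight]
  exact ⟨fun x => by linarith [Knapsack.one_fourth_le_sq_half_sub hm (Knapsack.weight x)],
    Knapsack.pseudoDensity m, Knapsack.isPseudoDensity_pseudoDensity hm,
    Knapsack.cubeAvg_pseudoDensity_mul_sq_half_sub_weight (by omega)⟩
end

section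
/- For every nonnegative matrix M ∈ ℝ^{p×q} and every η ∈ (0,1], if M admits a psd factorization M_{ij} = Tr(A_i B_j) with A_i, B_j ∈ S_+^r, ‖A_i‖ ≤ γ, ‖B_j‖_* ≤ 1, then there exist psd matrices P_i, Q_j with: M_{ij} ≤ Tr(P_i Q_j) ≤ M_{ij} + η‖M‖_∞·Tr(B_j); (1/p)∑_i P_i = Id; ‖P_i‖ ≤ 1 + γ/(η‖M‖_∞); and ‖Q_j‖_* ≤ γ + η‖M‖_∞. -/
/-- The (ℓ² → ℓ²) operator norm of a real square matrix. -/
noncomputable def opNorm {r : ℕ} (A : Matrix (Fin r) (Fin r) ℝ) : ℝ :=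
  ‖Matrix.toEuclideanCLM (𝕜 := ℝ) A‖

/-- The trace (nuclear) norm of a real square matrix: `Tr √(Aᵀ A)`. -/
noncomputable def traceNorm {r : ℕ} (A : Matrix (Fin r) (Fin r) ℝ) : ℝ :=
  ((Matrix.posSemidef_conjTranspose_mul_self A).1.eigenvectorUnitary.1 *
    Matrix.diagonal (Real.sqrt ∘ (Matrix.posSemidef_conjTranspose_mul_self A).1.eigenvalues) *
    (star (Matrix.posSemidef_conjTranspose_mul_self A).1.eigenvectorUnitary :
      Matrix (Fin r) (Fin r) ℝ)).trace

/-!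
Write `D = c • 1 + (1/p) ∑ᵢ Aᵢ` with `c = η‖M‖_∞ > 0`, so `D` is positive definite, and
rescale by its square root: `Pᵢ = D^{-1/2} (c • 1 + Aᵢ) D^{-1/2}` and `Qⱼ = D^{1/2} Bⱼ D^{1/2}`.
The conjugations cancel inside the trace, so `Tr (Pᵢ Qⱼ) = Tr ((c • 1 + Aᵢ) Bⱼ) = Mᵢⱼ + c Tr Bⱼ`,
and the `Pᵢ` average to `D^{-1/2} D D^{-1/2} = 1`. Both norm bounds are Loewner inequalities
transported by the conjugation: `Aᵢ ≤ γ • 1` gives `c • 1 + Aᵢ ≤ (1 + γ / c) • D`, hence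
`Pᵢ ≤ (1 + γ / c) • 1`, and `D ≤ (c + γ) • 1` gives `‖Qⱼ‖_* = Tr (D Bⱼ) ≤ (c + γ) Tr Bⱼ ≤ c + γ`.
-/

open scoped MatrixOrder Matrix.Norms.L2Operator Ring
open Matrix CFC

section ConjSqrt

variable {A : Type*} [PartialOrder A] [Ring A] [StarRing A] [TopologicalSpace A]
  [StarOrderedRing A] [Algebra ℝ A] [ContinuousFunctionalCalculus ℝ A IsSelfAdjoint]
  [NonnegSpectrumClass ℝ A] [IsSemitopologicalRing A]

lemma CFC.conjSqrt_nonneg (c : A) {a : A} (ha : 0 ≤ a) : 0 ≤ conjSqrt c a :=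
  conjugate_nonneg_of_nonneg ha (sqrt_nonneg c)

lemma CFC.conjSqrt_ringInverse_le_smul_one [T2Space A] {c a : A}
    (hc : IsStrictlyPositive c) {t : ℝ} (h : a ≤ t • c) : conjSqrt c⁻¹ʳ a ≤ t • 1 := by
  simpa only [map_smul, conjSqrt_ringInverse_self c hc] using conjSqrt_monotone (c := c⁻¹ʳ) h

end ConjSqrt

namespace Matrix

variable {n : Type*} [Fintype n] [DecidableEq n]

lemma trace_mul_nonneg {X Y : Matrix n n ℝ} (hX : 0 ≤ X) (hY : 0 ≤ Y) : 0 ≤ (X * Y).trace := by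
  have h : (X * Y).trace = (conjSqrt X Y).trace := by
    rw [conjSqrt_apply, trace_mul_cycle, sqrt_mul_sqrt_self X hX]
  exact h ▸ (conjSqrt_nonneg X hY).posSemidef.trace_nonneg

lemma trace_mul_le_of_le_smul_one {X Y : Matrix n n ℝ} {t : ℝ} (hX : X ≤ t • 1) (hY : 0 ≤ Y) :
    (X * Y).trace ≤ t * Y.trace := by
  have h := trace_mul_nonneg (sub_nonneg.2 hX) hY
  rwa [sub_mul, trace_sub, smul_mul, one_mul, trace_smul, smul_eq_mul, sub_nonneg] at h

lemma trace_conjSqrt {D : Matrix n n ℝ} (hD : 0 ≤ D) (Y : Matrix n n ℝ) :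
    (conjSqrt D Y).trace = (D * Y).trace := by
  rw [conjSqrt_apply, trace_mul_cycle, sqrt_mul_sqrt_self D hD]

lemma trace_conjSqrt_ringInverse_mul_conjSqrt {D : Matrix n n ℝ} (hD : IsStrictlyPositive D)
    (X Y : Matrix n n ℝ) : (conjSqrt D⁻¹ʳ X * conjSqrt D Y).trace = (X * Y).trace := by
  set S := sqrt D
  have hS : IsUnit S := hD.isUnit_cfcSqrt
  have h : S⁻¹ʳ * X * S⁻¹ʳ * (S * Y * S) = S⁻¹ʳ * (X * Y * S) := by
    simp only [mul_assoc, ← mul_assoc S⁻¹ʳ S, Ring.inverse_mul_cancel S hS, one_mul]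
  rw [conjSqrt_apply, conjSqrt_apply, sqrt_ringInverse, h, trace_mul_comm, mul_assoc,
    Ring.mul_inverse_cancel S hS, mul_one]

lemma le_smul_one_of_norm_le {X : Matrix n n ℝ} (hX : X.IsHermitian) {t : ℝ} (h : ‖X‖ ≤ t) :
    X ≤ t • 1 := by
  rw [← Algebra.algebraMap_eq_smul_one, le_algebraMap_iff_spectrum_le hX.isSelfAdjoint]
  intro x hx
  exact (le_abs_self x).trans
    ((IsometricContinuousFunctionalCalculus.norm_spectrum_le X hx hX.isSelfAdjoint).trans h)

lemma norm_le_of_le_smul_one {X : Matrix n n ℝ} (hX : 0 ≤ X) {t : ℝ} (ht : 0 ≤ t)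
    (h : X ≤ t • 1) : ‖X‖ ≤ t := by
  rw [← Algebra.algebraMap_eq_smul_one, le_algebraMap_iff_spectrum_le] at h
  have hcfc := norm_cfc_le (f := id) (a := X) ht fun x hx ↦
    abs_le.2 ⟨by linarith [spectrum_nonneg_of_nonneg hX hx], h x hx⟩
  rwa [cfc_id ℝ X (IsSelfAdjoint.of_nonneg hX)] at hcfc

end Matrix

lemma opNorm_eq_norm {r : ℕ} (X : Matrix (Fin r) (Fin r) ℝ) : opNorm X = ‖X‖ := rfl

lemma traceNorm_eq_trace_sqrt {r : ℕ} (X : Matrix (Fin r) (Fin r) ℝ) :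
    traceNorm X = (sqrt (Xᴴ * X)).trace := by
  have hXX := posSemidef_conjTranspose_mul_self X
  rw [sqrt_eq_real_sqrt _ hXX.nonneg, cfcₙ_eq_cfc, hXX.isHermitian.cfc_eq]
  simp [traceNorm, IsHermitian.cfc, Unitary.conjStarAlgAut_apply]

lemma traceNorm_eq_trace {r : ℕ} {X : Matrix (Fin r) (Fin r) ℝ} (hX : 0 ≤ X) :
    traceNorm X = X.trace := by
  rw [traceNorm_eq_trace_sqrt, hX.posSemidef.isHermitian.eq, sqrt_mul_self X hX]

section ShiftedMean

variable {ι n : Type*} [Fintype ι] [DecidableEq n]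

noncomputable def shiftedMean (c : ℝ) (A : ι → Matrix n n ℝ) : Matrix n n ℝ :=
  c • 1 + (Fintype.card ι : ℝ)⁻¹ • ∑ i, A i

lemma inv_card_smul_sum_smul_one_add [Nonempty ι] (c : ℝ) (A : ι → Matrix n n ℝ) :
    (Fintype.card ι : ℝ)⁻¹ • ∑ i, (c • 1 + A i) = shiftedMean c A := by
  have hι : (Fintype.card ι : ℝ) ≠ 0 := Nat.cast_ne_zero.2 Fintype.card_ne_zero
  rw [Finset.sum_add_distrib, Finset.sum_const, Finset.card_univ, ← Nat.cast_smul_eq_nsmul ℝ,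
    smul_add, smul_smul, inv_mul_cancel₀ hι, one_smul, shiftedMean]

variable [Fintype n] {c γ : ℝ} {A : ι → Matrix n n ℝ}

lemma isStrictlyPositive_shiftedMean (hc : 0 < c) (hA : ∀ i, 0 ≤ A i) :
    IsStrictlyPositive (shiftedMean c A) := by
  rw [isStrictlyPositive_iff_posDef]
  have hmean : 0 ≤ (Fintype.card ι : ℝ)⁻¹ • ∑ i, A i :=
    smul_nonneg (by positivity) (Finset.sum_nonneg fun i _ ↦ hA i)
  exact (PosDef.one.smul hc).add_posSemidef hmean.posSemidef

lemma shiftedMean_le_smul_one [Nonempty ι] (hAγ : ∀ i, A i ≤ γ • 1) :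
    shiftedMean c A ≤ (c + γ) • 1 := by
  have hι : (Fintype.card ι : ℝ) ≠ 0 := Nat.cast_ne_zero.2 Fintype.card_ne_zero
  have hmean : (Fintype.card ι : ℝ)⁻¹ • ∑ i, A i ≤ γ • 1 :=
    calc (Fintype.card ι : ℝ)⁻¹ • ∑ i, A i
        ≤ (Fintype.card ι : ℝ)⁻¹ • ∑ _i : ι, γ • (1 : Matrix n n ℝ) :=
          smul_le_smul_of_nonneg_left (Finset.sum_le_sum fun i _ ↦ hAγ i) (by positivity)
      _ = γ • 1 := by
          rw [Finset.sum_const, Finset.card_univ, ← Nat.cast_smul_eq_nsmul ℝ, smul_smul,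
            inv_mul_cancel₀ hι, one_smul]
  rw [shiftedMean, add_smul]
  exact add_le_add_right hmean _

lemma smul_one_add_le_smul_shiftedMean (hc : 0 < c) (hγ : 0 ≤ γ) (hA : ∀ i, 0 ≤ A i)
    (hAγ : ∀ i, A i ≤ γ • 1) (i : ι) : c • 1 + A i ≤ (1 + γ / c) • shiftedMean c A := by
  have key : (1 + γ / c) • shiftedMean c A - (c • 1 + A i)
      = (γ • 1 - A i) + ((1 + γ / c) * (Fintype.card ι : ℝ)⁻¹) • ∑ j, A j := by
    rw [shiftedMean, smul_add, smul_smul, smul_smul, add_mul, one_mul,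
      div_mul_cancel₀ γ hc.ne']
    module
  rw [← sub_nonneg, key]
  exact add_nonneg (sub_nonneg.2 (hAγ i))
    (smul_nonneg (by positivity) (Finset.sum_nonneg fun j _ ↦ hA j))

end ShiftedMean

theorem stmt5_general (p q r : ℕ) (hp : 0 < p)
    (M : Matrix (Fin p) (Fin q) ℝ)
    (η : ℝ) (hη0 : 0 < η)
    (Minf : ℝ)
    (hMpos : 0 < Minf)
    (γ : ℝ)
    (A : Fin p → Matrix (Fin r) (Fin r) ℝ) (B : Fin q → Matrix (Fin r) (Fin r) ℝ)
    (hA : ∀ i, (A i).PosSemidef) (hB : ∀ j, (B j).PosSemidef)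
    (hfac : ∀ i j, M i j = (A i * B j).trace)
    (hAn : ∀ i, opNorm (A i) ≤ γ) (hBn : ∀ j, traceNorm (B j) ≤ 1) :
    ∃ P : Fin p → Matrix (Fin r) (Fin r) ℝ, ∃ Q : Fin q → Matrix (Fin r) (Fin r) ℝ,
      (∀ i, (P i).PosSemidef) ∧ (∀ j, (Q j).PosSemidef) ∧
      (∀ i j, M i j ≤ (P i * Q j).trace ∧
        (P i * Q j).trace ≤ M i j + η * Minf * (B j).trace) ∧
      ((p : ℝ)⁻¹ • ∑ i, P i = (1 : Matrix (Fin r) (Fin r) ℝ)) ∧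
      (∀ i, opNorm (P i) ≤ 1 + γ / (η * Minf)) ∧
      (∀ j, traceNorm (Q j) ≤ γ + η * Minf) := by
  simp only [opNorm_eq_norm] at hAn ⊢
  set c := η * Minf
  have hc : 0 < c := mul_pos hη0 hMpos
  have : Nonempty (Fin p) := ⟨⟨0, hp⟩⟩
  have hγ : 0 ≤ γ := (norm_nonneg _).trans (hAn ⟨0, hp⟩)
  have hA0 (i) : 0 ≤ A i := (hA i).nonneg
  have hAγ (i) : A i ≤ γ • 1 := le_smul_one_of_norm_le (hA i).isHermitian (hAn i)
  have hB0 (j) : 0 ≤ B j := (hB j).nonneg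
  have hBtr (j) : (B j).trace ≤ 1 := traceNorm_eq_trace (hB j).nonneg ▸ hBn j
  set D := shiftedMean c A
  have hD : IsStrictlyPositive D := isStrictlyPositive_shiftedMean hc hA0
  have hX0 (i) : 0 ≤ c • 1 + A i := add_nonneg (smul_nonneg hc.le PosSemidef.one.nonneg) (hA0 i)
  have hPQ (i j) : (conjSqrt D⁻¹ʳ (c • 1 + A i) * conjSqrt D (B j)).trace
      = M i j + c * (B j).trace := by
    rw [trace_conjSqrt_ringInverse_mul_conjSqrt hD, add_mul, trace_add, smul_mul, one_mul,
      trace_smul, smul_eq_mul, hfac, add_comm]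
  refine ⟨fun i ↦ conjSqrt D⁻¹ʳ (c • 1 + A i), fun j ↦ conjSqrt D (B j),
    fun i ↦ (conjSqrt_nonneg _ (hX0 i)).posSemidef, fun j ↦ (conjSqrt_nonneg _ (hB0 j)).posSemidef,
    fun i j ↦ ⟨?_, (hPQ i j).le⟩, ?_, fun i ↦ ?_, fun j ↦ ?_⟩
  · rw [hPQ]
    exact le_add_of_nonneg_right (mul_nonneg hc.le (hB j).trace_nonneg)
  · have hmean := inv_card_smul_sum_smul_one_add c A
    rw [Fintype.card_fin] at hmean
    rw [← map_sum, ← map_smul, hmean, conjSqrt_ringInverse_self D hD]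
  · exact norm_le_of_le_smul_one (conjSqrt_nonneg _ (hX0 i)) (by positivity)
      (conjSqrt_ringInverse_le_smul_one hD (smul_one_add_le_smul_shiftedMean hc hγ hA0 hAγ i))
  · rw [traceNorm_eq_trace (conjSqrt_nonneg _ (hB0 j)), trace_conjSqrt hD.nonneg]
    calc (D * B j).trace ≤ (c + γ) * (B j).trace :=
          trace_mul_le_of_le_smul_one (shiftedMean_le_smul_one hAγ) (hB0 j)
      _ ≤ γ + c := by nlinarith [hBtr j]

/-- psd factorization rescaling: Let `M ∈ ℝ^{p×q}` be a nonnegative matrix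
with maximum entry `Minf > 0`, let `η ∈ (0,1]`, and suppose `M_{ij} = Tr(A_i B_j)` with
`A_i, B_j ∈ S_+^r`, `‖A_i‖ ≤ γ`, `‖B_j‖_* ≤ 1`.  Then there exist psd matrices `P_i, Q_j`
such that `M_{ij} ≤ Tr(P_i Q_j) ≤ M_{ij} + η‖M‖_∞·Tr(B_j)`, `(1/p)∑_i P_i = Id`,
`‖P_i‖ ≤ 1 + γ/(η‖M‖_∞)`, and `‖Q_j‖_* ≤ γ + η‖M‖_∞`. -/
theorem stmt5 (p q r : ℕ) (hp : 0 < p) (hq : 0 < q)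
    (M : Matrix (Fin p) (Fin q) ℝ) (hM : ∀ i j, 0 ≤ M i j)
    (η : ℝ) (hη0 : 0 < η) (hη1 : η ≤ 1)
    (Minf : ℝ) (hMub : ∀ i j, M i j ≤ Minf) (hMmem : ∃ i j, M i j = Minf)
    (hMpos : 0 < Minf)
    (γ : ℝ)
    (A : Fin p → Matrix (Fin r) (Fin r) ℝ) (B : Fin q → Matrix (Fin r) (Fin r) ℝ)
    (hA : ∀ i, (A i).PosSemidef) (hB : ∀ j, (B j).PosSemidef)
    (hfac : ∀ i j, M i j = (A i * B j).trace)
    (hAn : ∀ i, opNorm (A i) ≤ γ) (hBn : ∀ j, traceNorm (B j) ≤ 1) :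
    ∃ P : Fin p → Matrix (Fin r) (Fin r) ℝ, ∃ Q : Fin q → Matrix (Fin r) (Fin r) ℝ,
      (∀ i, (P i).PosSemidef) ∧ (∀ j, (Q j).PosSemidef) ∧
      (∀ i j, M i j ≤ (P i * Q j).trace ∧
        (P i * Q j).trace ≤ M i j + η * Minf * (B j).trace) ∧
      ((p : ℝ)⁻¹ • ∑ i, P i = (1 : Matrix (Fin r) (Fin r) ℝ)) ∧
      (∀ i, opNorm (P i) ≤ 1 + γ / (η * Minf)) ∧
      (∀ j, traceNorm (Q j) ≤ γ + η * Minf) :=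
  stmt5_general p q r hp M η hη0 Minf hMpos γ A B hA hB hfac hAn hBn
end

section
/- Let F be a real symmetric matrix and Q a density matrix (psd with trace 1). Then for every λ ≥ (1/ε)·D(Q‖U), the Gibbs state X* = e^{−λF}/Tr(e^{−λF}) satisfies Tr(F X*) ≤ Tr(F Q) + ε, where U = Id/Tr(Id) is the maximally mixed state and D(X‖Y) = Tr(X(log X − log Y)) is the quantum relative entropy. -/
/-!
Let `r` be the diagonal of `Q` in an eigenbasis of `F`, so that `Tr(F Q) = ∑ f_j r_j`. Since
`r = M p` with `p` the spectrum of `Q` and `M` doubly stochastic (the entrywise squares of an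
orthogonal matrix), Jensen's inequality for `x log x` gives `D(r‖u) ≤ D(Q‖U)`, and the statement
becomes one about probability vectors. There the Gibbs variational principle
`-log Z ≤ λ ⟨r, f⟩ + ∑ r log r` and the entropy bound `∑ q log q ≥ -log n` for the Gibbs
distribution `q` give `λ ⟨q, f⟩ ≤ λ ⟨r, f⟩ + D(r‖u) ≤ λ (⟨r, f⟩ + ε)`. If `λ = 0`, then
`D(r‖u) = 0` forces `r` to be uniform, which is the Gibbs distribution at `λ = 0`.
-/

/-- The quantum relative entropy `D(Q ‖ U) = Tr(Q (log Q − log U))` of a symmetric psd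
matrix `Q` with respect to the maximally mixed state `U = Id/n`, computed spectrally:
`∑_i λ_i log λ_i + log n`, where `λ_i` are the eigenvalues of `Q` (with `0 log 0 = 0`). -/
noncomputable def relEntUniform {n : ℕ} (Q : Matrix (Fin n) (Fin n) ℝ)
    (hQ : Q.IsHermitian) : ℝ :=
  (∑ i, hQ.eigenvalues i * Real.log (hQ.eigenvalues i)) + Real.log n

open Real Finset Matrix
open scoped Matrix

section Entropy

variable {ι : Type*} [Fintype ι]

lemma sub_le_mul_sub_log {x y : ℝ} (hx : 0 ≤ x) (hy : 0 < y) :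
    x - y ≤ x * (log x - log y) := by
  rcases hx.eq_or_lt with rfl | hx
  · simpa using hy.le
  · have h := mul_le_mul_of_nonneg_left (log_le_sub_one_of_pos (div_pos hy hx)) hx.le
    rw [log_div hy.ne' hx.ne', mul_sub_one, mul_div_cancel₀ _ hx.ne'] at h
    linarith

/-- The Gibbs variational principle: the free energy `⟨r, e⟩ + ∑ r log r` is minimized by the
Gibbs distribution `exp (-e) / Z`, where it equals `-log Z`. -/
theorem neg_log_sum_exp_le (e r : ι → ℝ) (hr0 : ∀ i, 0 ≤ r i) (hr1 : ∑ i, r i = 1) :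
    -log (∑ i, exp (-e i)) ≤ ∑ i, r i * e i + ∑ i, r i * log (r i) := by
  have : Nonempty ι := univ_nonempty_iff.1 (nonempty_of_sum_ne_zero (hr1 ▸ one_ne_zero))
  set Z := ∑ i, exp (-e i)
  have hZ : 0 < Z := sum_pos (fun i _ => exp_pos _) univ_nonempty
  have hlog : ∀ i, log (exp (-e i) / Z) = -e i - log Z := fun i => by
    rw [log_div (exp_pos _).ne' hZ.ne', log_exp]
  have hklein := sum_le_sum fun i (_ : i ∈ univ) =>
    sub_le_mul_sub_log (hr0 i) (div_pos (exp_pos (-e i)) hZ)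
  rw [sum_sub_distrib, ← sum_div, hr1, div_self hZ.ne', sub_self] at hklein
  simp only [hlog] at hklein
  have : ∑ i, r i * (log (r i) - (-e i - log Z)) =
      ∑ i, r i * e i + ∑ i, r i * log (r i) + log Z := by
    simp only [mul_sub, mul_neg, sum_sub_distrib, sum_neg_distrib, ← sum_mul, hr1]
    ring
  linarith

lemma neg_log_card_le_sum_mul_log (r : ι → ℝ) (hr0 : ∀ i, 0 ≤ r i) (hr1 : ∑ i, r i = 1) :
    -log (Fintype.card ι) ≤ ∑ i, r i * log (r i) := by
  simpa using neg_log_sum_exp_le 0 r hr0 hr1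

lemma eq_inv_card_of_sum_mul_log_le (r : ι → ℝ) (hr0 : ∀ i, 0 ≤ r i) (hr1 : ∑ i, r i = 1)
    (h : ∑ i, r i * log (r i) ≤ -log (Fintype.card ι)) (i : ι) :
    r i = (Fintype.card ι : ℝ)⁻¹ := by
  have hcard : (0 : ℝ) < Fintype.card ι := by
    have : Nonempty ι := ⟨i⟩
    exact_mod_cast Fintype.card_pos
  have hconst := strictConvexOn_mul_log.eq_of_le_map_sum (t := univ)
    (w := fun _ => (Fintype.card ι : ℝ)⁻¹) (p := r) (by simp [hcard]) (by simp [hcard.ne'])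
    (fun i _ => hr0 i) (by simp [← mul_sum, hr1, log_inv]; nlinarith [inv_pos.2 hcard])
  have : ∑ j, r j = Fintype.card ι * r i := by
    simp [fun j => hconst (mem_univ j) (mem_univ i)]
  rw [hr1] at this
  field_simp
  linarith

lemma sum_mulVec_mul_log_le [DecidableEq ι] {M : Matrix ι ι ℝ} (hM : M ∈ doublyStochastic ℝ ι)
    {p : ι → ℝ} (hp : ∀ i, 0 ≤ p i) :
    ∑ j, (M *ᵥ p) j * log ((M *ᵥ p) j) ≤ ∑ i, p i * log (p i) := by
  obtain ⟨hM0, hrow, hcol⟩ := mem_doublyStochastic_iff_sum.1 hM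
  calc ∑ j, (M *ᵥ p) j * log ((M *ᵥ p) j)
      ≤ ∑ j, ∑ i, M j i * (p i * log (p i)) := sum_le_sum fun j _ =>
        convexOn_mul_log.map_sum_le (fun i _ => hM0 j i) (hrow j) (fun i _ => hp i)
    _ = ∑ i, p i * log (p i) := by
        rw [sum_comm]
        simp only [← sum_mul, hcol, one_mul]

lemma gibbs_mean_le_log_card_sub_log_sum_exp [Nonempty ι] (e : ι → ℝ) :
    (∑ j, exp (-e j))⁻¹ * ∑ j, e j * exp (-e j) ≤
      log (Fintype.card ι) - log (∑ j, exp (-e j)) := by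
  set Z := ∑ j, exp (-e j)
  have hZ : 0 < Z := sum_pos (fun i _ => exp_pos _) univ_nonempty
  have hq1 : ∑ j, exp (-e j) / Z = 1 := by rw [← sum_div, div_self hZ.ne']
  have hent := neg_log_card_le_sum_mul_log _ (fun j => (div_pos (exp_pos (-e j)) hZ).le) hq1
  have : ∑ j, exp (-e j) / Z * log (exp (-e j) / Z) =
      -(Z⁻¹ * ∑ j, e j * exp (-e j)) - log Z := by
    simp only [log_div (exp_pos _).ne' hZ.ne', log_exp, mul_sub, sum_sub_distrib, ← sum_mul, hq1,
      one_mul, mul_sum]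
    congr 1
    rw [← sum_neg_distrib]
    exact sum_congr rfl fun j _ => by ring
  linarith

theorem gibbs_mean_le_add (r f : ι → ℝ) (hr0 : ∀ i, 0 ≤ r i) (hr1 : ∑ i, r i = 1)
    {ε lam : ℝ} (hε : 0 < ε)
    (hlam : (1 / ε) * (∑ i, r i * log (r i) + log (Fintype.card ι)) ≤ lam) :
    (∑ j, exp (-(lam * f j)))⁻¹ * ∑ j, f j * exp (-(lam * f j)) ≤ ∑ j, f j * r j + ε := by
  have : Nonempty ι := univ_nonempty_iff.1 (nonempty_of_sum_ne_zero (hr1 ▸ one_ne_zero))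
  have hD0 : 0 ≤ ∑ i, r i * log (r i) + log (Fintype.card ι) := by
    linarith [neg_log_card_le_sum_mul_log r hr0 hr1]
  have hD : ∑ i, r i * log (r i) + log (Fintype.card ι) ≤ lam * ε := by
    rwa [one_div, inv_mul_le_iff₀ hε, mul_comm] at hlam
  have hlam0 : 0 ≤ lam := nonneg_of_mul_nonneg_left (hD0.trans hD) hε
  rcases hlam0.eq_or_lt with rfl | hlam0
  · have hr := eq_inv_card_of_sum_mul_log_le r hr0 hr1 (by linarith)
    simp [hr, ← sum_mul, mul_comm, hε.le]
  · have hmean := gibbs_mean_le_log_card_sub_log_sum_exp (fun j => lam * f j)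
    have hgibbs := neg_log_sum_exp_le (fun j => lam * f j) r hr0 hr1
    have henergy : ∑ i, r i * (lam * f i) = lam * ∑ i, f i * r i := by
      rw [mul_sum]
      exact sum_congr rfl fun i _ => by ring
    simp only [mul_assoc, ← mul_sum] at hmean
    refine le_of_mul_le_mul_left ?_ hlam0
    rw [mul_left_comm] at hmean
    linarith

end Entropy

namespace Matrix

variable {ι : Type*} [Fintype ι] [DecidableEq ι]

section
open scoped Matrix.Norms.L2Operator

-- `CFC.real_exp_eq_normedSpace_exp` needs a normed algebra; `NormedSpace.exp` does not
-- depend on the choice of norm.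

lemma exp_neg_smul_eq_cfc {A : Matrix ι ι ℝ} (hA : A.IsHermitian) (lam : ℝ) :
    NormedSpace.exp (-(lam • A)) = cfc (fun x => exp (-(lam * x))) A := by
  have : IsSelfAdjoint (lam • A) := .smul (.all lam) hA
  rw [← CFC.real_exp_eq_normedSpace_exp, cfc_comp' exp (fun x => -(lam * x)) A, cfc_neg,
    cfc_const_mul_id lam A]

end

lemma IsHermitian.trace_cfc {𝕜 : Type*} [RCLike 𝕜] {A : Matrix ι ι 𝕜} (hA : A.IsHermitian)
    (g : ℝ → ℝ) : (cfc g A).trace = ∑ i, (g (hA.eigenvalues i) : 𝕜) := by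
  rw [hA.cfc_eq, IsHermitian.cfc, Unitary.conjStarAlgAut_apply, trace_mul_cycle,
    Unitary.coe_star_mul_self, one_mul, trace_diagonal]
  rfl

lemma IsHermitian.trace_mul_eq_sum_eigenvalues_mul {𝕜 : Type*} [RCLike 𝕜] {A : Matrix ι ι 𝕜}
    (hA : A.IsHermitian) (B : Matrix ι ι 𝕜) :
    (A * B).trace = ∑ i, (hA.eigenvalues i : 𝕜) *
      (star (hA.eigenvectorUnitary : Matrix ι ι 𝕜) * B * hA.eigenvectorUnitary) i i := by
  conv_lhs => rw [hA.spectral_theorem, Unitary.conjStarAlgAut_apply]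
  rw [trace_mul_cycle, ← Matrix.mul_assoc, trace_mul_cycle]
  simp only [trace, diag_apply, mul_diagonal, Function.comp_apply]
  exact sum_congr rfl fun i _ => by rw [Matrix.mul_assoc, mul_comm]

lemma hadamard_self_mem_doublyStochastic {A : Matrix ι ι ℝ} (hA : A ∈ unitaryGroup ι ℝ) :
    A ⊙ A ∈ doublyStochastic ℝ ι := by
  refine mem_doublyStochastic_iff_sum.2 ⟨fun i j => mul_self_nonneg _, fun i => ?_, fun j => ?_⟩
  · simpa [mul_apply] using congr_fun₂ (mem_unitaryGroup_iff.1 hA) i i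
  · simpa [mul_apply] using congr_fun₂ (mem_unitaryGroup_iff'.1 hA) j j

lemma diag_mul_diagonal_mul_star (A : Matrix ι ι ℝ) (p : ι → ℝ) :
    (A * diagonal p * star A).diag = (A ⊙ A) *ᵥ p := by
  ext j
  rw [diag_apply, mul_apply]
  simp only [mul_diagonal, star_apply, star_trivial, mulVec, dotProduct, hadamard_apply]
  exact sum_congr rfl fun i _ => by ring

lemma IsHermitian.exists_diag_star_mul_mul_eq_mulVec {Q : Matrix ι ι ℝ} (hQ : Q.IsHermitian)
    {U : Matrix ι ι ℝ} (hU : U ∈ unitaryGroup ι ℝ) :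
    ∃ M ∈ doublyStochastic ℝ ι, (star U * Q * U).diag = M *ᵥ hQ.eigenvalues := by
  have hB : star U * hQ.eigenvectorUnitary ∈ unitaryGroup ι ℝ :=
    Submonoid.mul_mem _ (Unitary.star_mem hU) hQ.eigenvectorUnitary.2
  refine ⟨_, hadamard_self_mem_doublyStochastic hB, ?_⟩
  rw [← diag_mul_diagonal_mul_star]
  conv_lhs => rw [hQ.spectral_theorem, Unitary.conjStarAlgAut_apply]
  simp [Matrix.mul_assoc, star_mul]

lemma IsHermitian.trace_mul_gibbs {A : Matrix ι ι ℝ} (hA : A.IsHermitian) (lam : ℝ) :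
    (A * ((NormedSpace.exp (-(lam • A))).trace⁻¹ • NormedSpace.exp (-(lam • A)))).trace =
      (∑ j, Real.exp (-(lam * hA.eigenvalues j)))⁻¹ *
        ∑ j, hA.eigenvalues j * Real.exp (-(lam * hA.eigenvalues j)) := by
  have hmul : A * cfc (fun x => Real.exp (-(lam * x))) A =
      cfc (fun x => x * Real.exp (-(lam * x))) A := by
    rw [cfc_mul (fun x => x) _ A, cfc_id' ℝ A]
  rw [exp_neg_smul_eq_cfc hA, Matrix.mul_smul, trace_smul, hmul, hA.trace_cfc, hA.trace_cfc,
    smul_eq_mul]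
  rfl

end Matrix

theorem stmt6_general (n : ℕ)
    (F Q : Matrix (Fin n) (Fin n) ℝ)
    (hF : F.IsHermitian) (hQ : Q.PosSemidef) (hQtr : Q.trace = 1)
    (ε lam : ℝ) (hε : 0 < ε)
    (hlam : (1 / ε) * relEntUniform Q hQ.1 ≤ lam) :
    (F * ((NormedSpace.exp (-(lam • F))).trace⁻¹ •
        NormedSpace.exp (-(lam • F)))).trace ≤ (F * Q).trace + ε := by
  set p := hQ.1.eigenvalues
  obtain ⟨M, hM, hdiag⟩ := hQ.1.exists_diag_star_mul_mul_eq_mulVec hF.eigenvectorUnitary.2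
  have hr0 : ∀ j, 0 ≤ (M *ᵥ p) j := nonneg_mulVec_of_mem_rowStochastic
    (mem_doublyStochastic_iff_mem_rowStochastic_and_mem_colStochastic.1 hM).1
    hQ.eigenvalues_nonneg
  have hr1 : ∑ j, (M *ᵥ p) j = 1 := by
    rw [sum_mulVec_of_mem_doublyStochastic hM, ← hQtr, hQ.1.trace_eq_sum_eigenvalues]
    rfl
  have hrel : ∑ j, (M *ᵥ p) j * log ((M *ᵥ p) j) + log (Fintype.card (Fin n)) ≤
      relEntUniform Q hQ.1 := by
    simpa [relEntUniform] using sum_mulVec_mul_log_le hM hQ.eigenvalues_nonneg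
  rw [hF.trace_mul_gibbs, hF.trace_mul_eq_sum_eigenvalues_mul]
  simp only [← diag_apply, hdiag, RCLike.ofReal_real_eq_id, id]
  exact gibbs_mean_le_add _ _ hr0 hr1 hε
    (hlam.trans' (mul_le_mul_of_nonneg_left hrel (by positivity)))

/-- Let `F` be a real symmetric matrix and `Q` a density matrix (psd, trace 1).
For every `λ ≥ (1/ε)·D(Q‖U)`, the Gibbs state `X* = e^{−λF}/Tr(e^{−λF})` satisfies
`Tr(F X*) ≤ Tr(F Q) + ε`. -/
theorem stmt6 (n : ℕ) (hn : 0 < n)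
    (F Q : Matrix (Fin n) (Fin n) ℝ)
    (hF : F.IsHermitian) (hQ : Q.PosSemidef) (hQtr : Q.trace = 1)
    (ε lam : ℝ) (hε : 0 < ε)
    (hlam : (1 / ε) * relEntUniform Q hQ.1 ≤ lam) :
    (F * ((NormedSpace.exp (-(lam • F))).trace⁻¹ •
        NormedSpace.exp (-(lam • F)))).trace ≤ (F * Q).trace + ε :=
  stmt6_general n F Q hF hQ hQtr ε lam hε hlam
end

section
/- Let X(t) be a continuously differentiable symmetric-matrix-valued function with eigenvalues λ_i(t). Then Tr(X'(t) · d/dt e^{X(t)}) ≤ 2·Tr(e^{X(t)})·‖X'(t)‖², where ‖·‖ is the operator norm. -/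
/-! The derivative of `exp` at `A` in direction `H` is the series
`∑ₖ (1/k!) ∑_{a+b=k-1} Aᵃ H Aᵇ`. Writing `H` in an orthonormal eigenbasis of `A` as `Y`, with
eigenvalues `vᵢ`, its trace against `H` becomes `∑ᵢⱼ Yᵢⱼ² (e^{vᵢ} - e^{vⱼ}) / (vᵢ - vⱼ)`, the
divided difference being `e^{vᵢ}` when `vᵢ = vⱼ`. Each divided difference is at most
`e^{vᵢ} + e^{vⱼ}`, and by the symmetry of `Y` this gives `2 ∑ᵢ e^{vᵢ} ∑ⱼ Yᵢⱼ²`, where every row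
sum `∑ⱼ Yᵢⱼ²` is at most `‖Y‖² = ‖H‖²`. -/

open Finset NormedSpace Unitary
open scoped Nat RightActions

section ExpFDeriv

variable {𝕂 𝔸 : Type*} [RCLike 𝕂] [NormedRing 𝔸] [NormedAlgebra 𝕂 𝔸]

variable (𝕂) in
noncomputable def powFDeriv (x : 𝔸) (k : ℕ) : 𝔸 →L[𝕂] 𝔸 :=
  ∑ i ∈ range k, x ^ (k - 1 - i) •> ContinuousLinearMap.id 𝕂 𝔸 <• x ^ i

lemma powFDeriv_apply (x h : 𝔸) (k : ℕ) :
    powFDeriv 𝕂 x k h = ∑ i ∈ range k, x ^ (k - 1 - i) * h * x ^ i := by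
  simp [powFDeriv]

lemma norm_smul_id_op_smul_le (a b : 𝔸) :
    ‖a •> ContinuousLinearMap.id 𝕂 𝔸 <• b‖ ≤ ‖a‖ * ‖b‖ := by
  refine ContinuousLinearMap.opNorm_le_bound _ (by positivity) fun h => ?_
  calc ‖(a •> ContinuousLinearMap.id 𝕂 𝔸 <• b) h‖ = ‖a * h * b‖ := by simp
    _ ≤ ‖a‖ * ‖h‖ * ‖b‖ := norm_mul₃_le
    _ = ‖a‖ * ‖b‖ * ‖h‖ := by ring

lemma norm_powFDeriv_le [NormOneClass 𝔸] {x : 𝔸} {r : ℝ} (hx : ‖x‖ ≤ r) (k : ℕ) :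
    ‖powFDeriv 𝕂 x k‖ ≤ k * r ^ (k - 1) := by
  have hr : 0 ≤ r := (norm_nonneg x).trans hx
  have hpow (m : ℕ) : ‖x ^ m‖ ≤ r ^ m :=
    (norm_pow_le x m).trans (pow_le_pow_left₀ (norm_nonneg x) hx m)
  have hterm : ∀ i ∈ range k,
      ‖x ^ (k - 1 - i) •> ContinuousLinearMap.id 𝕂 𝔸 <• x ^ i‖ ≤ r ^ (k - 1) := by
    intro i hi
    have hik : k - 1 - i + i = k - 1 := Nat.sub_add_cancel (by grind)
    calc _ ≤ ‖x ^ (k - 1 - i)‖ * ‖x ^ i‖ := norm_smul_id_op_smul_le _ _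
      _ ≤ r ^ (k - 1 - i) * r ^ i := mul_le_mul (hpow _) (hpow _) (norm_nonneg _) (by positivity)
      _ = r ^ (k - 1) := by rw [← pow_add, hik]
  refine (norm_sum_le_of_le (range k) hterm).trans_eq ?_
  simp

lemma summable_mul_pow_pred_div_factorial (r : ℝ) :
    Summable fun k : ℕ => (k ! : ℝ)⁻¹ * (k * r ^ (k - 1)) := by
  rw [← summable_nat_add_iff 1]
  refine (Real.summable_pow_div_factorial r).congr fun k => ?_
  rw [Nat.factorial_succ]
  push_cast
  field_simp

variable (𝕂) in
noncomputable def expFDeriv (x : 𝔸) : 𝔸 →L[𝕂] 𝔸 :=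
  ∑' k, (k !⁻¹ : 𝕂) • powFDeriv 𝕂 x k

variable [NormOneClass 𝔸] [CompleteSpace 𝔸]

lemma summable_expFDeriv (x : 𝔸) : Summable fun k => (k !⁻¹ : 𝕂) • powFDeriv 𝕂 x k := by
  refine (summable_mul_pow_pred_div_factorial ‖x‖).of_norm_bounded fun k => ?_
  refine (norm_smul_le (k !⁻¹ : 𝕂) (powFDeriv 𝕂 x k)).trans ?_
  rw [norm_inv, RCLike.norm_natCast]
  gcongr
  exact norm_powFDeriv_le le_rfl k

lemma hasSum_expFDeriv_apply (x h : 𝔸) :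
    HasSum (fun k => (k !⁻¹ : 𝕂) • powFDeriv 𝕂 x k h) (expFDeriv 𝕂 x h) :=
  (summable_expFDeriv x).hasSum.mapL (ContinuousLinearMap.apply 𝕂 𝔸 h)

theorem hasFDerivAt_exp_expFDeriv (x : 𝔸) : HasFDerivAt exp (expFDeriv 𝕂 x) x := by
  have hball : ∀ y ∈ Metric.ball x 1, ‖y‖ ≤ ‖x‖ + 1 := fun y hy => by
    have := norm_le_norm_add_norm_sub' y x
    rw [Metric.mem_ball, dist_eq_norm] at hy
    linarith
  have hunif : TendstoUniformlyOn (fun N y => ∑ k ∈ range N, (k !⁻¹ : 𝕂) • powFDeriv 𝕂 y k)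
      (expFDeriv 𝕂) Filter.atTop (Metric.ball x 1) := by
    refine tendstoUniformlyOn_tsum_nat (summable_mul_pow_pred_div_factorial (‖x‖ + 1))
      fun k y hy => (norm_smul_le (k !⁻¹ : 𝕂) (powFDeriv 𝕂 y k)).trans ?_
    rw [norm_inv, RCLike.norm_natCast]
    gcongr
    exact norm_powFDeriv_le (hball y hy) k
  have hpartial (N : ℕ) (y : 𝔸) : HasFDerivAt (fun z => ∑ k ∈ range N, (k !⁻¹ : 𝕂) • z ^ k)
      (∑ k ∈ range N, (k !⁻¹ : 𝕂) • powFDeriv 𝕂 y k) y :=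
    HasFDerivAt.fun_sum fun k _ => (hasFDerivAt_pow' (𝕜 := 𝕂) (x := y) k).const_smul (k !⁻¹ : 𝕂)
  exact hasFDerivAt_of_tendstoUniformlyOn Metric.isOpen_ball hunif (fun N y _ => hpartial N y)
    (fun y _ => (exp_series_hasSum_exp' y).tendsto_sum_nat) (Metric.mem_ball_self one_pos)

end ExpFDeriv

namespace Real

lemma hasSum_pow_div_factorial (x : ℝ) : HasSum (fun k => x ^ k / k !) (exp x) := by
  rw [exp_eq_exp_ℝ]
  exact NormedSpace.expSeries_div_hasSum_exp x

lemma hasSum_geom_sum₂_div_factorial_of_ne {x y : ℝ} (h : x ≠ y) :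
    HasSum (fun k => (k ! : ℝ)⁻¹ * ∑ i ∈ range k, x ^ i * y ^ (k - 1 - i))
      ((exp x - exp y) / (x - y)) := by
  have hxy : x - y ≠ 0 := sub_ne_zero.2 h
  refine (((hasSum_pow_div_factorial x).sub (hasSum_pow_div_factorial y)).div_const
    (x - y)).congr_fun fun k => ?_
  rw [eq_div_iff hxy, mul_assoc, geom_sum₂_mul]
  ring

lemma hasSum_geom_sum₂_self_div_factorial (x : ℝ) :
    HasSum (fun k => (k ! : ℝ)⁻¹ * ∑ i ∈ range k, x ^ i * x ^ (k - 1 - i)) (exp x) := by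
  rw [← hasSum_nat_add_iff' 1, sum_range_one]
  simp only [range_zero, sum_empty, mul_zero, sub_zero]
  refine (hasSum_pow_div_factorial x).congr_fun fun k => ?_
  have hk (i) (hi : i ∈ range (k + 1)) : x ^ i * x ^ (k + 1 - 1 - i) = x ^ k := by
    rw [← pow_add, Nat.add_sub_cancel, Nat.add_sub_cancel' (Nat.le_of_lt_succ (mem_range.1 hi))]
  rw [sum_congr rfl hk, sum_const, card_range, nsmul_eq_mul, Nat.factorial_succ]
  push_cast
  field_simp

lemma summable_geom_sum₂_div_factorial (x y : ℝ) :
    Summable fun k => (k ! : ℝ)⁻¹ * ∑ i ∈ range k, x ^ i * y ^ (k - 1 - i) := by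
  rcases eq_or_ne x y with rfl | h
  exacts [(hasSum_geom_sum₂_self_div_factorial x).summable,
    (hasSum_geom_sum₂_div_factorial_of_ne h).summable]

lemma exp_sub_exp_le_exp_mul_sub (x y : ℝ) : exp x - exp y ≤ exp x * (x - y) := by
  have := mul_le_mul_of_nonneg_left (add_one_le_exp (y - x)) (exp_pos x).le
  rw [← exp_add, add_sub_cancel] at this
  linarith

lemma exp_sub_exp_div_sub_le {x y : ℝ} (h : x ≠ y) :
    (exp x - exp y) / (x - y) ≤ exp x + exp y := by
  wlog hlt : y < x generalizing x y
  · rw [← neg_div_neg_eq, neg_sub, neg_sub, add_comm]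
    exact this h.symm (lt_of_le_of_ne (not_lt.1 hlt) h)
  rw [div_le_iff₀ (sub_pos.2 hlt)]
  nlinarith [exp_sub_exp_le_exp_mul_sub x y, exp_pos y]

lemma tsum_geom_sum₂_div_factorial_le (x y : ℝ) :
    ∑' k, (k ! : ℝ)⁻¹ * ∑ i ∈ range k, x ^ i * y ^ (k - 1 - i) ≤ exp x + exp y := by
  rcases eq_or_ne x y with rfl | h
  · rw [(hasSum_geom_sum₂_self_div_factorial x).tsum_eq]
    linarith [exp_pos x]
  · rw [(hasSum_geom_sum₂_div_factorial_of_ne h).tsum_eq]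
    exact exp_sub_exp_div_sub_le h

end Real

section L2OpNorm

open scoped Matrix.Norms.L2Operator

namespace Matrix

-- The L2 operator-norm topology on matrices is, by construction, the product topology.
lemma hasDerivAt_iff_forall_apply {m n : Type*} [Fintype m] [Fintype n] [DecidableEq n]
    {f : ℝ → Matrix m n ℝ} {f' : Matrix m n ℝ} {t : ℝ} :
    HasDerivAt f f' t ↔ ∀ i j, HasDerivAt (fun u => f u i j) (f' i j) t := by
  simp only [hasDerivAt_iff_tendsto_slope]
  exact tendsto_pi_nhds.trans (forall_congr' fun i => tendsto_pi_nhds)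

lemma isHermitian_of_hasDerivAt_apply {n : Type*} {X : ℝ → Matrix n n ℝ} {X' : Matrix n n ℝ}
    {t : ℝ}
    (hX : ∀ i j, HasDerivAt (fun u => X u i j) (X' i j) t) (hsym : ∀ s, (X s).IsHermitian) :
    X'.IsHermitian := by
  refine IsHermitian.ext fun i j => ?_
  have hswap : (fun u => X u j i) = fun u => X u i j :=
    funext fun u => by simpa using (hsym u).apply i j
  rw [star_trivial]
  exact (hX j i).unique (hswap ▸ hX i j)

variable {n : Type*} [Fintype n]

lemma sum_sq_apply_le_norm_sq {m : Type*} [Fintype m] [DecidableEq n] (M : Matrix m n ℝ)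
    (j : n) : ∑ i, M i j ^ 2 ≤ ‖M‖ ^ 2 := by
  have hcol := l2_opNorm_mulVec M (EuclideanSpace.single j 1)
  rw [PiLp.norm_single, norm_one, mul_one, EuclideanSpace.norm_eq] at hcol
  have := pow_le_pow_left₀ (Real.sqrt_nonneg _) hcol 2
  rw [Real.sq_sqrt (by positivity)] at this
  simpa using this

variable [DecidableEq n]

lemma trace_mul_diagonal_mul_mul_diagonal {R : Type*} [CommSemiring R] (Y : Matrix n n R)
    (a b : n → R) :
    (Y * (diagonal a * Y * diagonal b)).trace = ∑ i, ∑ j, Y i j * a j * Y j i * b i := by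
  refine sum_congr rfl fun i _ => ?_
  rw [diag_apply, mul_apply]
  simp only [mul_diagonal, diagonal_mul, mul_assoc]

lemma trace_conjStarAlgAut {𝕜 : Type*} [RCLike 𝕜] (u : unitaryGroup n 𝕜) (M : Matrix n n 𝕜) :
    (conjStarAlgAut 𝕜 _ u M).trace = M.trace := by
  rw [conjStarAlgAut_apply, trace_mul_cycle, Unitary.coe_star_mul_self, one_mul]

lemma isHermitian_conjStarAlgAut {𝕜 : Type*} [RCLike 𝕜] {H : Matrix n n 𝕜} (hH : H.IsHermitian)
    (u : unitaryGroup n 𝕜) : (conjStarAlgAut 𝕜 _ u H).IsHermitian := by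
  rw [IsHermitian, ← star_eq_conjTranspose, ← map_star, hH.star_eq]

lemma norm_conjStarAlgAut {𝕜 : Type*} [RCLike 𝕜] (u : unitaryGroup n 𝕜) (M : Matrix n n 𝕜) :
    ‖conjStarAlgAut 𝕜 _ u M‖ = ‖M‖ := by
  rw [conjStarAlgAut_apply, ← Unitary.coe_star, CStarRing.norm_mul_coe_unitary,
    CStarRing.norm_coe_unitary_mul]

namespace IsHermitian

variable {A H : Matrix n n ℝ}

lemma trace_exp (hA : A.IsHermitian) :
    (NormedSpace.exp A).trace = ∑ i, Real.exp (hA.eigenvalues i) := by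
  rw [← CFC.real_exp_eq_normedSpace_exp hA.isSelfAdjoint, hA.cfc_eq, IsHermitian.cfc,
    trace_conjStarAlgAut, trace_diagonal]
  rfl

lemma trace_mul_pow_mul_mul_pow (hA : A.IsHermitian) (hH : H.IsHermitian) (p q : ℕ) :
    (H * (A ^ p * H * A ^ q)).trace =
      ∑ i, ∑ j, conjStarAlgAut ℝ _ (star hA.eigenvectorUnitary) H i j ^ 2 *
        (hA.eigenvalues i ^ q * hA.eigenvalues j ^ p) := by
  have hY := isHermitian_conjStarAlgAut hH (star hA.eigenvectorUnitary)
  rw [← trace_conjStarAlgAut (star hA.eigenvectorUnitary)]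
  simp only [map_mul, map_pow, hA.conjStarAlgAut_star_eigenvectorUnitary, diagonal_pow,
    trace_mul_diagonal_mul_mul_diagonal, Pi.pow_apply, Function.comp_apply,
    RCLike.ofReal_real_eq_id, id]
  refine sum_congr rfl fun i _ => sum_congr rfl fun j _ => ?_
  rw [← hY.apply i j, star_trivial]
  ring

lemma trace_mul_powFDeriv (hA : A.IsHermitian) (hH : H.IsHermitian) (k : ℕ) :
    (H * powFDeriv ℝ A k H).trace =
      ∑ i, ∑ j, conjStarAlgAut ℝ _ (star hA.eigenvectorUnitary) H i j ^ 2 *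
        ∑ l ∈ range k, hA.eigenvalues i ^ l * hA.eigenvalues j ^ (k - 1 - l) := by
  rw [powFDeriv_apply, mul_sum, trace_sum]
  simp only [hA.trace_mul_pow_mul_mul_pow hH, mul_sum]
  rw [sum_comm]
  refine sum_congr rfl fun i _ => ?_
  rw [sum_comm]

theorem trace_mul_expFDeriv_le [Nonempty n] (hA : A.IsHermitian) (hH : H.IsHermitian) :
    (H * expFDeriv ℝ A H).trace ≤ 2 * (NormedSpace.exp A).trace * ‖H‖ ^ 2 := by
  set Y := conjStarAlgAut ℝ _ (star hA.eigenvectorUnitary) H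
  set v := hA.eigenvalues
  have hY (i j : n) : Y j i = Y i j :=
    (star_trivial _).symm.trans ((isHermitian_conjStarAlgAut hH _).apply i j)
  have hsum : HasSum (fun k => (H * ((k ! : ℝ)⁻¹ • powFDeriv ℝ A k H)).trace)
      (∑ i, ∑ j, Y i j ^ 2 *
        ∑' k, (k ! : ℝ)⁻¹ * ∑ l ∈ range k, v i ^ l * v j ^ (k - 1 - l)) := by
    refine (hasSum_sum fun i _ => hasSum_sum fun j _ =>
      (Real.summable_geom_sum₂_div_factorial (v i) (v j)).hasSum.mul_left (Y i j ^ 2)).congr_fun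
        fun k => ?_
    rw [Matrix.mul_smul, trace_smul, trace_mul_powFDeriv hA hH, smul_eq_mul]
    simp only [mul_sum]
    exact sum_congr rfl fun i _ => sum_congr rfl fun j _ => sum_congr rfl fun l _ => by ring
  have htrace : (H * expFDeriv ℝ A H).trace = _ :=
    (((hasSum_expFDeriv_apply A H).mul_left H).map (traceAddMonoidHom n ℝ)
      continuous_id.matrix_trace).unique hsum
  have hrow (i : n) : ∑ j, Y i j ^ 2 ≤ ‖H‖ ^ 2 := by
    calc ∑ j, Y i j ^ 2 = ∑ j, Y j i ^ 2 := by simp only [hY]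
      _ ≤ ‖Y‖ ^ 2 := sum_sq_apply_le_norm_sq Y i
      _ = ‖H‖ ^ 2 := by rw [norm_conjStarAlgAut]
  have hswap : ∑ i, ∑ j, Y i j ^ 2 * Real.exp (v j) = ∑ i, ∑ j, Y i j ^ 2 * Real.exp (v i) := by
    rw [sum_comm]
    simp only [hY]
  rw [htrace, hA.trace_exp]
  calc ∑ i, ∑ j, Y i j ^ 2 * ∑' k, (k ! : ℝ)⁻¹ * ∑ l ∈ range k, v i ^ l * v j ^ (k - 1 - l)
      ≤ ∑ i, ∑ j, Y i j ^ 2 * (Real.exp (v i) + Real.exp (v j)) := by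
        gcongr with i _ j _
        exact Real.tsum_geom_sum₂_div_factorial_le _ _
    _ = 2 * ∑ i, Real.exp (v i) * ∑ j, Y i j ^ 2 := by
        simp only [mul_add, sum_add_distrib, hswap, ← two_mul, mul_sum]
        exact sum_congr rfl fun i _ => sum_congr rfl fun j _ => by ring
    _ ≤ 2 * ∑ i, Real.exp (v i) * ‖H‖ ^ 2 := by
        gcongr with i
        exact hrow i
    _ = 2 * (∑ i, Real.exp (v i)) * ‖H‖ ^ 2 := by rw [← sum_mul, mul_assoc]

end IsHermitian
end Matrix

end L2OpNorm

theorem stmt10_general (n : ℕ) (X X' : ℝ → Matrix (Fin n) (Fin n) ℝ)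
    (hX : ∀ (i j : Fin n) (s : ℝ), HasDerivAt (fun u => X u i j) (X' s i j) s)
    (hsym : ∀ s : ℝ, (X s).IsHermitian)
    (t : ℝ) (E' : Matrix (Fin n) (Fin n) ℝ)
    (hE : ∀ i j : Fin n, HasDerivAt (fun u => NormedSpace.exp (X u) i j) (E' i j) t) :
    (X' t * E').trace ≤ 2 * (NormedSpace.exp (X t)).trace * (opNorm (X' t)) ^ 2 := by
  -- with this norm, `‖M‖` is `opNorm M` by definition
  open scoped Matrix.Norms.L2Operator in
  rcases isEmpty_or_nonempty (Fin n) with hn | hn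
  · simp [Matrix.trace]
  have hXt : HasDerivAt X (X' t) t := Matrix.hasDerivAt_iff_forall_apply.2 fun i j => hX i j t
  have hexp : HasDerivAt (fun u => exp (X u)) (expFDeriv ℝ (X t) (X' t)) t :=
    (hasFDerivAt_exp_expFDeriv (X t)).comp_hasDerivAt t hXt
  obtain rfl : E' = expFDeriv ℝ (X t) (X' t) := by
    ext i j
    exact (hE i j).unique (Matrix.hasDerivAt_iff_forall_apply.1 hexp i j)
  exact (hsym t).trace_mul_expFDeriv_le
    (Matrix.isHermitian_of_hasDerivAt_apply (fun i j => hX i j t) hsym)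

/-- Let `X(t)` be a continuously differentiable symmetric-matrix-valued
function (differentiability expressed entrywise, with derivative `X'`), and let `E'` be
the (entrywise) derivative of `t ↦ e^{X(t)}` at `t`.  Then
`Tr(X'(t) · d/dt e^{X(t)}) ≤ 2·Tr(e^{X(t)})·‖X'(t)‖²`. -/
theorem stmt10 (n : ℕ) (X X' : ℝ → Matrix (Fin n) (Fin n) ℝ)
    (hX : ∀ (i j : Fin n) (s : ℝ), HasDerivAt (fun u => X u i j) (X' s i j) s)
    (hXc : ∀ i j : Fin n, Continuous fun s => X' s i j)
    (hsym : ∀ s : ℝ, (X s).IsHermitian)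
    (t : ℝ) (E' : Matrix (Fin n) (Fin n) ℝ)
    (hE : ∀ i j : Fin n, HasDerivAt (fun u => NormedSpace.exp (X u) i j) (E' i j) t) :
    (X' t * E').trace ≤ 2 * (NormedSpace.exp (X t)).trace * (opNorm (X' t)) ^ 2 :=
  stmt10_general n X X' hX hsym t E' hE
end

section
/- For every subset α ⊆ [n] with |α| ≤ ℓ and a uniformly random m-subset S of [n], Pr[|α ∩ S| > d/2] ≤ binom(ℓ, ⌈d/2⌉)·binom(n, m−⌈d/2⌉)/binom(n, m) ≤ (ℓm/(n−m))^{d/2} for even d with d/2 ≤ min(ℓ, m). -/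
/-!
If `#(α ∩ S) > d/2`, then `S` contains some `d/2`-subset `β` of `α`; a union bound over `β`,
together with the injection `S ↦ S \ β` for a fixed `β`, bounds the count by
`C(|α|, d/2) · C(n, m - d/2)`. For the second inequality, `C(ℓ, k) ≤ ℓ^k` and lowering the
lower index of `C(n, m)` by one multiplies it by at most `m / (n - m)`.
-/

open Finset

namespace Finset

variable {ι : Type*} [DecidableEq ι]

theorem card_filter_superset_powersetCard_le (s β : Finset ι) (m : ℕ) :
    #{S ∈ s.powersetCard m | β ⊆ S} ≤ (#s).choose (m - #β) := by
  rw [← card_powersetCard]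
  refine card_le_card_of_injOn (· \ β) (fun S hS => ?_) (fun S₁ hS₁ S₂ hS₂ h => ?_)
  · simp only [coe_filter, Set.mem_ofPred_eq, mem_powersetCard] at hS
    simp only [mem_coe, mem_powersetCard]
    exact ⟨sdiff_subset.trans hS.1.1, by rw [card_sdiff_of_subset hS.2, hS.1.2]⟩
  · simp only [coe_filter, Set.mem_ofPred_eq] at hS₁ hS₂
    rw [← union_sdiff_of_subset hS₁.2, ← union_sdiff_of_subset hS₂.2]
    exact congrArg (β ∪ ·) h

theorem card_filter_le_card_inter_powersetCard_le (s α : Finset ι) (m k : ℕ) :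
    #{S ∈ s.powersetCard m | k ≤ #(α ∩ S)} ≤ (#α).choose k * (#s).choose (m - k) := by
  have hcover : {S ∈ s.powersetCard m | k ≤ #(α ∩ S)} ⊆
      (α.powersetCard k).biUnion fun β => {S ∈ s.powersetCard m | β ⊆ S} := by
    intro S hS
    rw [mem_filter] at hS
    obtain ⟨β, hβ, hβk⟩ := exists_subset_card_eq hS.2
    exact mem_biUnion.2 ⟨β, mem_powersetCard.2 ⟨hβ.trans inter_subset_left, hβk⟩,
      mem_filter.2 ⟨hS.1, hβ.trans inter_subset_right⟩⟩
  calc #{S ∈ s.powersetCard m | k ≤ #(α ∩ S)}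
      ≤ #(α.powersetCard k) * (#s).choose (m - k) := by
        refine (card_le_card hcover).trans (card_biUnion_le_card_mul _ _ _ fun β hβ => ?_)
        rw [← (mem_powersetCard.1 hβ).2]
        exact card_filter_superset_powersetCard_le s β m
    _ = (#α).choose k * (#s).choose (m - k) := by rw [card_powersetCard]

end Finset

namespace Nat

theorem choose_sub_mul_pow_le (n : ℕ) {m k : ℕ} (hk : k ≤ m) :
    n.choose (m - k) * (n - m) ^ k ≤ n.choose m * m ^ k := by
  induction k with
  | zero => simp
  | succ k ih =>
    have hstep : n.choose (m - (k + 1)) * (n - m) ≤ n.choose (m - k) * m := calc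
      n.choose (m - (k + 1)) * (n - m) ≤ n.choose (m - (k + 1)) * (n - (m - (k + 1))) := by
          gcongr; omega
      _ = n.choose (m - k) * (m - k) := by
          rw [← choose_succ_right_eq, show m - (k + 1) + 1 = m - k by omega]
      _ ≤ n.choose (m - k) * m := by gcongr; omega
    calc n.choose (m - (k + 1)) * (n - m) ^ (k + 1)
        = n.choose (m - (k + 1)) * (n - m) * (n - m) ^ k := by ring
      _ ≤ n.choose (m - k) * m * (n - m) ^ k := by gcongr
      _ = n.choose (m - k) * (n - m) ^ k * m := by ring
      _ ≤ n.choose m * m ^ k * m := Nat.mul_le_mul_right _ (ih (by omega))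
      _ = n.choose m * m ^ (k + 1) := by ring

theorem choose_mul_choose_sub_div_choose_le (ℓ n : ℕ) {m k : ℕ} (hmn : m < n) (hk : k ≤ m) :
    ((ℓ.choose k * n.choose (m - k) : ℕ) : ℝ) / n.choose m ≤ ((ℓ : ℝ) * m / (n - m)) ^ k := by
  have hchoose : (0 : ℝ) < n.choose m := by exact_mod_cast choose_pos hmn.le
  have hgap : (0 : ℝ) < n - m := sub_pos.2 (by exact_mod_cast hmn)
  rw [div_pow, div_le_div_iff₀ hchoose (by positivity), ← Nat.cast_sub hmn.le]
  have key : ℓ.choose k * n.choose (m - k) * (n - m) ^ k ≤ (ℓ * m) ^ k * n.choose m := calc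
    ℓ.choose k * n.choose (m - k) * (n - m) ^ k
        = ℓ.choose k * (n.choose (m - k) * (n - m) ^ k) := by ring
    _ ≤ ℓ ^ k * (n.choose m * m ^ k) :=
        Nat.mul_le_mul (choose_le_pow ℓ k) (choose_sub_mul_pow_le n hk)
    _ = (ℓ * m) ^ k * n.choose m := by ring
  exact_mod_cast key

end Nat

theorem stmt15_general (n d ℓ m : ℕ) (hmn : m < n) (hdm : d / 2 ≤ m)
    (α : Finset (Fin n)) (hα : α.card ≤ ℓ) :
    (((Finset.powersetCard m (Finset.univ : Finset (Fin n))).filter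
        (fun S => d / 2 < (α ∩ S).card)).card : ℝ) / (Nat.choose n m : ℝ)
      ≤ ((Nat.choose ℓ (d / 2) * Nat.choose n (m - d / 2) : ℕ) : ℝ) / (Nat.choose n m : ℝ) ∧
    ((Nat.choose ℓ (d / 2) * Nat.choose n (m - d / 2) : ℕ) : ℝ) / (Nat.choose n m : ℝ)
      ≤ (((ℓ : ℝ) * m) / ((n : ℝ) - m)) ^ (d / 2) := by
  refine ⟨?_, Nat.choose_mul_choose_sub_div_choose_le ℓ n hmn hdm⟩
  have hcount : #{S ∈ (univ : Finset (Fin n)).powersetCard m | d / 2 < #(α ∩ S)}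
      ≤ ℓ.choose (d / 2) * n.choose (m - d / 2) := calc
    _ ≤ #{S ∈ (univ : Finset (Fin n)).powersetCard m | d / 2 ≤ #(α ∩ S)} :=
        card_le_card (monotone_filter_right _ fun _ _ => le_of_lt)
    _ ≤ (#α).choose (d / 2) * (#(univ : Finset (Fin n))).choose (m - d / 2) :=
        card_filter_le_card_inter_powersetCard_le _ _ _ _
    _ ≤ ℓ.choose (d / 2) * n.choose (m - d / 2) := by
        rw [card_univ, Fintype.card_fin]
        gcongr
  gcongr

/-- For every `α ⊆ [n]` with `|α| ≤ ℓ` and a uniformly random `m`-subset `S`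
of `[n]`, with `d` even and `d/2 ≤ min(ℓ, m)`, `m < n`:
`Pr[|α ∩ S| > d/2] ≤ binom(ℓ, d/2)·binom(n, m−d/2)/binom(n, m) ≤ (ℓm/(n−m))^{d/2}`. -/
theorem stmt15 (n d ℓ m : ℕ) (hn : 1 ≤ n) (hd : 0 < d) (hℓ : 0 < ℓ) (hm : 0 < m)
    (hdn : d ≤ n) (hℓn : ℓ ≤ n) (hmn : m < n) (hde : Even d)
    (hdℓ : d / 2 ≤ ℓ) (hdm : d / 2 ≤ m)
    (α : Finset (Fin n)) (hα : α.card ≤ ℓ) :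
    (((Finset.powersetCard m (Finset.univ : Finset (Fin n))).filter
        (fun S => d / 2 < (α ∩ S).card)).card : ℝ) / (Nat.choose n m : ℝ)
      ≤ ((Nat.choose ℓ (d / 2) * Nat.choose n (m - d / 2) : ℕ) : ℝ) / (Nat.choose n m : ℝ) ∧
    ((Nat.choose ℓ (d / 2) * Nat.choose n (m - d / 2) : ℕ) : ℝ) / (Nat.choose n m : ℝ)
      ≤ (((ℓ : ℝ) * m) / ((n : ℝ) - m)) ^ (d / 2) :=
  stmt15_general n d ℓ m hmn hdm α hα
end

section
/- Let Π_n be a boolean CSP restricted to n variables, and let U be a subspace of functions {0,1}^n → ℝ of minimal dimension achieving a (c,s)-approximation for Π_n. Let M(ℑ, x) = c − ℑ(x), indexed by instances ℑ with max(ℑ) ≤ s and assignments x. Then rk_psd(M)² ≥ dim(U) ≥ rk_psd(M). -/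
/-!
If every row `c − ℑ` of `M` is a sum of squares of functions in `U`, expanding these functions in
a basis `b` of `U` gives `(c − ℑ)(x) = ∑ⱼ ⟨αⱼ, v(x)⟩² = Tr((∑ⱼ αⱼαⱼᵀ)(v(x)v(x)ᵀ))` with
`v(x) = (bₖ(x))ₖ`, a psd factorization of size `dim U`. Conversely, from a factorization of size `r`
write `A_ℑ = DᴴD` and `B_x = C_xᴴC_x`; then `Tr(A_ℑ B_x)` is the sum of the squared entries of
`C_x Dᴴ`, and as functions of `x` these entries lie in the span of the `r²` functions
`x ↦ C_x(m, k)`. That span achieves the approximation, so minimality of `U` gives `dim U ≤ r²`.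
-/

/-- The psd rank of a (nonnegative) matrix `M : I × J → ℝ`: the least `r` such that
`M i j = Tr(A_i B_j)` for psd matrices `A_i, B_j ∈ S_+^r`. -/
noncomputable def PsdRank {I J : Type*} (M : I → J → ℝ) : ℕ :=
  sInf {r : ℕ |
    ∃ (A : I → Matrix (Fin r) (Fin r) ℝ) (B : J → Matrix (Fin r) (Fin r) ℝ),
      (∀ i, (A i).PosSemidef) ∧ (∀ j, (B j).PosSemidef) ∧
        ∀ i j, M i j = (A i * B j).trace}

/-- `sos_U(f) ≤ c`: `c − f` is a sum of squares of functions from the subspace `U`. -/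
def SosUpperLE (n : ℕ) (U : Submodule ℝ ((Fin n → Bool) → ℝ))
    (f : (Fin n → Bool) → ℝ) (c : ℝ) : Prop :=
  ∃ (t : ℕ) (g : Fin t → (Fin n → Bool) → ℝ),
    (∀ i, g i ∈ U) ∧ ∀ x, c - f x = ∑ i, (g i x) ^ 2

/-- `U` achieves a `(c,s)`-approximation for the family of instances `Insts`:
`max(ℑ) ≤ s` implies `sos_U(ℑ) ≤ c`. -/
def Achieves (n : ℕ) (Insts : Set ((Fin n → Bool) → ℝ)) (c s : ℝ)
    (U : Submodule ℝ ((Fin n → Bool) → ℝ)) : Prop :=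
  ∀ F ∈ Insts, (∀ x, F x ≤ s) → SosUpperLE n U F c

open Matrix

section PsdFactorization

variable {I X : Type*}

def HasPsdFactorization (M : I → X → ℝ) (r : ℕ) : Prop :=
  ∃ (A : I → Matrix (Fin r) (Fin r) ℝ) (B : X → Matrix (Fin r) (Fin r) ℝ),
    (∀ i, (A i).PosSemidef) ∧ (∀ x, (B x).PosSemidef) ∧ ∀ i x, M i x = (A i * B x).trace

theorem psdRank_le {M : I → X → ℝ} {r : ℕ} (h : HasPsdFactorization M r) : PsdRank M ≤ r :=
  Nat.sInf_le h

theorem hasPsdFactorization_psdRank {M : I → X → ℝ} {r : ℕ} (h : HasPsdFactorization M r) :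
    HasPsdFactorization M (PsdRank M) :=
  Nat.sInf_mem (s := {r | HasPsdFactorization M r}) ⟨r, h⟩

end PsdFactorization

section SumOfSquares

variable {X : Type*}

def IsSosIn (U : Submodule ℝ (X → ℝ)) (f : X → ℝ) : Prop :=
  ∃ (t : ℕ) (g : Fin t → X → ℝ), (∀ i, g i ∈ U) ∧ ∀ x, f x = ∑ i, g i x ^ 2

theorem isSosIn_of_fintype {ι : Type*} [Fintype ι] {U : Submodule ℝ (X → ℝ)} {f : X → ℝ}
    (g : ι → X → ℝ) (hg : ∀ i, g i ∈ U) (hf : ∀ x, f x = ∑ i, g i x ^ 2) : IsSosIn U f := by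
  let e := Fintype.equivFin ι
  refine ⟨Fintype.card ι, g ∘ e.symm, fun i => hg _, fun x => ?_⟩
  rw [hf, ← e.symm.sum_comp]
  rfl

theorem Module.Basis.apply_eq_repr_dotProduct {ι : Type*} [Fintype ι]
    {U : Submodule ℝ (X → ℝ)} (b : Module.Basis ι ℝ U) (g : U) (x : X) :
    (g : X → ℝ) x = b.repr g ⬝ᵥ fun k => (b k : X → ℝ) x := by
  conv_lhs => rw [← b.sum_repr g]
  simp only [Submodule.coe_sum, Submodule.coe_smul, Finset.sum_apply, Pi.smul_apply,
    smul_eq_mul, dotProduct]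

theorem sosUpperLE_iff_isSosIn {n : ℕ} {U : Submodule ℝ ((Fin n → Bool) → ℝ)}
    {f : (Fin n → Bool) → ℝ} {c : ℝ} : SosUpperLE n U f c ↔ IsSosIn U (fun x => c - f x) :=
  Iff.rfl

end SumOfSquares

theorem trace_vecMulVec_self_mul_vecMulVec_self {R n : Type*} [CommSemiring R] [Fintype n]
    (u v : n → R) : (vecMulVec u u * vecMulVec v v).trace = (u ⬝ᵥ v) ^ 2 := by
  rw [vecMulVec_mul_vecMulVec, trace_vecMulVec, dotProduct_smul, smul_eq_mul, sq]

theorem trace_conjTranspose_mul_self_mul {k l n : Type*} [Fintype k] [Fintype l] [Fintype n]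
    (D : Matrix k n ℝ) (C : Matrix l n ℝ) :
    ((Dᴴ * D) * (Cᴴ * C)).trace = ∑ p : k × l, ((C * Dᴴ) p.2 p.1) ^ 2 := by
  have : (Dᴴ * D * (Cᴴ * C)).trace = ((C * Dᴴ)ᴴ * (C * Dᴴ)).trace := by
    rw [conjTranspose_mul, conjTranspose_conjTranspose, Matrix.mul_assoc, trace_mul_comm]
    simp only [Matrix.mul_assoc]
  rw [this, ← star_vec_dotProduct_vec]
  simp [dotProduct, vec, sq]

section Factorization
open scoped MatrixOrder Matrix.Norms.L2Operator

theorem Matrix.PosSemidef.exists_eq_conjTranspose_mul_self {n : Type*}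
    [Fintype n] {A : Matrix n n ℝ} (hA : A.PosSemidef) : ∃ B, A = Bᴴ * B := by
  classical
  exact CStarAlgebra.nonneg_iff_eq_star_mul_self.mp hA.nonneg

end Factorization

theorem hasPsdFactorization_finrank_of_isSosIn {I X : Type*} (U : Submodule ℝ (X → ℝ))
    [Module.Finite ℝ U] (M : I → X → ℝ) (hM : ∀ i, IsSosIn U (M i)) :
    HasPsdFactorization M (Module.finrank ℝ U) := by
  choose t g hgU hM using hM
  let b := Module.finBasis ℝ U
  let α i j := b.repr ⟨g i j, hgU i j⟩
  let v x k := (b k : X → ℝ) x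
  refine ⟨fun i => ∑ j, vecMulVec (α i j) (α i j), fun x => vecMulVec (v x) (v x),
    fun i => posSemidef_sum _ fun j _ => ?_, fun x => ?_, fun i x => ?_⟩
  · simpa using posSemidef_vecMulVec_star_self (α i j)
  · simpa using posSemidef_vecMulVec_star_self (v x)
  · rw [hM, Finset.sum_mul, trace_sum]
    refine Finset.sum_congr rfl fun j _ => ?_
    rw [trace_vecMulVec_self_mul_vecMulVec_self]
    exact congrArg (· ^ 2) (b.apply_eq_repr_dotProduct ⟨g i j, hgU i j⟩ x)

theorem exists_finrank_le_sq_isSosIn {I X : Type*} {M : I → X → ℝ} {r : ℕ}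
    (h : HasPsdFactorization M r) :
    ∃ V : Submodule ℝ (X → ℝ), Module.finrank ℝ V ≤ r ^ 2 ∧ ∀ i, IsSosIn V (M i) := by
  obtain ⟨A, B, hA, hB, hAB⟩ := h
  choose D hD using fun i => (hA i).exists_eq_conjTranspose_mul_self
  choose C hC using fun x => (hB x).exists_eq_conjTranspose_mul_self
  let φ : Fin r × Fin r → X → ℝ := fun p x => C x p.1 p.2
  refine ⟨Submodule.span ℝ (Set.range φ), ?_, fun i => isSosIn_of_fintype
    (fun (p : Fin r × Fin r) x => (C x * (D i)ᴴ) p.2 p.1) (fun p => ?_) fun x => ?_⟩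
  · simpa [sq, Set.finrank] using finrank_range_le_card (R := ℝ) φ
  · have : (fun x => (C x * (D i)ᴴ) p.2 p.1) = ∑ k, D i p.1 k • φ (p.2, k) := by
      ext x
      simp [φ, mul_apply, mul_comm]
    rw [this]
    exact Submodule.sum_mem _ fun k _ => Submodule.smul_mem _ _ (Submodule.subset_span ⟨_, rfl⟩)
  · rw [hAB, hD, hC, trace_conjTranspose_mul_self_mul]

theorem stmt16_general (n : ℕ) (c s : ℝ)
    (Insts : Set ((Fin n → Bool) → ℝ))
    (U : Submodule ℝ ((Fin n → Bool) → ℝ))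
    (hU : Achieves n Insts c s U)
    (hmin : ∀ V : Submodule ℝ ((Fin n → Bool) → ℝ),
      Achieves n Insts c s V → Module.finrank ℝ U ≤ Module.finrank ℝ V) :
    PsdRank (fun (F : {f // f ∈ Insts ∧ ∀ x, f x ≤ s}) (x : Fin n → Bool) => c - F.1 x)
        ≤ Module.finrank ℝ U ∧
      Module.finrank ℝ U ≤
        (PsdRank (fun (F : {f // f ∈ Insts ∧ ∀ x, f x ≤ s})
          (x : Fin n → Bool) => c - F.1 x)) ^ 2 := by
  have hU_fac := hasPsdFactorization_finrank_of_isSosIn U _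
    fun F : {f // f ∈ Insts ∧ ∀ x, f x ≤ s} => sosUpperLE_iff_isSosIn.mp (hU F.1 F.2.1 F.2.2)
  obtain ⟨V, hV, hV_sos⟩ := exists_finrank_le_sq_isSosIn (hasPsdFactorization_psdRank hU_fac)
  have hV_achieves : Achieves n Insts c s V := fun F hF hFs =>
    sosUpperLE_iff_isSosIn.mpr (hV_sos ⟨F, hF, hFs⟩)
  exact ⟨psdRank_le hU_fac, (hmin V hV_achieves).trans hV⟩

/-- Let `U` be a subspace of minimal dimension achieving a
`(c,s)`-approximation for a boolean CSP `Π_n` (formalized as an arbitrary family `Insts`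
of instances, i.e. functions on `{0,1}^n`).  Let `M(ℑ,x) = c − ℑ(x)` be indexed by
instances with `max(ℑ) ≤ s` and assignments `x`.  Then
`rk_psd(M)² ≥ dim(U) ≥ rk_psd(M)`. -/
theorem stmt16 (n : ℕ) (c s : ℝ) (hs : s < c)
    (Insts : Set ((Fin n → Bool) → ℝ))
    (U : Submodule ℝ ((Fin n → Bool) → ℝ))
    (hU : Achieves n Insts c s U)
    (hmin : ∀ V : Submodule ℝ ((Fin n → Bool) → ℝ),
      Achieves n Insts c s V → Module.finrank ℝ U ≤ Module.finrank ℝ V) :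
    PsdRank (fun (F : {f // f ∈ Insts ∧ ∀ x, f x ≤ s}) (x : Fin n → Bool) => c - F.1 x)
        ≤ Module.finrank ℝ U ∧
      Module.finrank ℝ U ≤
        (PsdRank (fun (F : {f // f ∈ Insts ∧ ∀ x, f x ≤ s})
          (x : Fin n → Bool) => c - F.1 x)) ^ 2 :=
  stmt16_general n c s Insts U hU hmin
end

section
/- If f : {0,1}^m → ℝ_{≥0} has a sum-of-squares certificate of degree d+2 (i.e., f = ∑_j g_j² with deg(g_j) ≤ 1 + d/2), then for all n ≥ m the matrix M_n^f(S,x) = f(x_S), indexed by m-subsets S of [n] and x ∈ {0,1}^n, has psd rank at most 1 + n^{1+d/2}. -/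
/-- Restriction `x_S ∈ {0,1}^m` of `x ∈ {0,1}^n` to an `m`-element subset `S` (in
increasing order of coordinates). -/
noncomputable def restrict (m n : ℕ) (S : Finset (Fin n)) (x : Fin n → Bool) :
    Fin m → Bool :=
  if h : S.card = m then fun i => x ((S.orderIsoOfFin h) i) else fun _ => false

open Matrix

theorem Finset.exists_image_univ_eq_of_card_le {α : Type*} [DecidableEq α] {k : ℕ}
    {A : Finset α} (hA : A.Nonempty) (hk : A.card ≤ k) :
    ∃ φ : Fin k → α, univ.image φ = A := by
  have : Nonempty A := hA.to_subtype
  let ι : A → Fin k := Fin.castLE hk ∘ A.equivFin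
  have hι : Function.Injective ι := (Fin.castLE_injective hk).comp A.equivFin.injective
  refine ⟨Subtype.val ∘ Function.invFun ι, ext fun a => ⟨?_, fun ha => ?_⟩⟩
  · simp only [mem_image, mem_univ, true_and, Function.comp_apply]
    rintro ⟨j, rfl⟩
    exact (Function.invFun ι j).2
  · obtain ⟨j, hj⟩ := Function.invFun_surjective hι ⟨a, ha⟩
    exact mem_image.mpr ⟨j, mem_univ _, by simp [hj]⟩

theorem Fintype.card_finset_card_le {α : Type*} [Fintype α] [DecidableEq α] (k : ℕ) :
    Fintype.card {A : Finset α // A.card ≤ k} ≤ 1 + Fintype.card α ^ k := by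
  let img : Option (Fin k → α) → {A : Finset α // A.card ≤ k}
    | none => ⟨∅, by simp⟩
    | some φ => ⟨Finset.univ.image φ, Finset.card_image_le.trans (by simp)⟩
  have himg : Function.Surjective img := by
    rintro ⟨A, hk⟩
    obtain rfl | hA := A.eq_empty_or_nonempty
    · exact ⟨none, rfl⟩
    · obtain ⟨φ, hφ⟩ := Finset.exists_image_univ_eq_of_card_le hA hk
      exact ⟨some φ, Subtype.ext hφ⟩
  simpa [add_comm] using Fintype.card_le_of_surjective img himg

theorem Matrix.posSemidef_vecMulVec_self {n : Type*} [Fintype n] (a : n → ℝ) :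
    (vecMulVec a a).PosSemidef := by
  simpa only [star_trivial] using posSemidef_vecMulVec_self_star a

theorem psdRank_le_card_of_eq_sum_sq {I J ι L : Type*} [Fintype ι] [Fintype L]
    (M : I → J → ℝ) (w : I → L → ι → ℝ) (v : J → ι → ℝ)
    (hM : ∀ i j, M i j = ∑ l, (w i l ⬝ᵥ v j) ^ 2) :
    PsdRank M ≤ Fintype.card ι := by
  let e := Fintype.equivFin ι
  refine Nat.sInf_le ⟨fun i => ∑ l, vecMulVec (w i l ∘ e.symm) (w i l ∘ e.symm),
    fun j => vecMulVec (v j ∘ e.symm) (v j ∘ e.symm),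
    fun i => posSemidef_sum _ fun l _ => posSemidef_vecMulVec_self _,
    fun j => posSemidef_vecMulVec_self _, fun i j => ?_⟩
  simp only [hM, Finset.sum_mul, trace_sum, vecMulVec_mul_vecMulVec, trace_vecMulVec,
    dotProduct_smul, dotProduct_comp_equiv_symm, smul_eq_mul, sq, Function.comp_assoc,
    Equiv.symm_comp_self, Function.comp_id]

def monomialVec {α : Type*} (k : ℕ) (x : α → Bool) : {A : Finset α // A.card ≤ k} → ℝ :=
  fun A => ∏ i ∈ A.1, bval (x i)

theorem HasDegLE.exists_comp_eq_dotProduct {m k : ℕ} {α : Type*} [Fintype α]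
    {g : (Fin m → Bool) → ℝ} (hg : HasDegLE m k g) (e : Fin m ↪ α) :
    ∃ w : {A : Finset α // A.card ≤ k} → ℝ, ∀ x, g (x ∘ e) = w ⬝ᵥ monomialVec k x := by
  classical
  obtain ⟨c, hc, hg⟩ := hg
  refine ⟨fun A => ∑ T, if T.map e = A.1 then c T else 0, fun x => ?_⟩
  simp only [hg, dotProduct, Finset.sum_mul, ite_mul, zero_mul]
  rw [Finset.sum_comm]
  refine Finset.sum_congr rfl fun T _ => ?_
  by_cases hT : T.card ≤ k
  · have hA : (T.map e).card ≤ k := by rwa [Finset.card_map]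
    have hmap (A : {A : Finset α // A.card ≤ k}) : T.map e = A.1 ↔ ⟨T.map e, hA⟩ = A :=
      (Subtype.ext_iff (a1 := ⟨T.map e, hA⟩)).symm
    simp only [hmap, Fintype.sum_ite_eq, monomialVec, Finset.prod_map]
    rfl
  · simp [hc T (not_le.mp hT)]

theorem restrict_of_card_eq {m n : ℕ} {S : Finset (Fin n)} (h : S.card = m) (x : Fin n → Bool) :
    restrict m n S x = x ∘ (S.orderEmbOfFin h).toEmbedding := by
  simp only [restrict, h, dif_pos]
  rfl

theorem stmt17_general (m n d : ℕ)
    (f : (Fin m → Bool) → ℝ)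
    (t : ℕ) (g : Fin t → (Fin m → Bool) → ℝ)
    (hdeg : ∀ j, HasDegLE m (1 + d / 2) (g j))
    (hsum : ∀ x, f x = ∑ j, (g j x) ^ 2) :
    PsdRank (fun (S : {S : Finset (Fin n) // S.card = m}) (x : Fin n → Bool) =>
        f (restrict m n S.1 x)) ≤ 1 + n ^ (1 + d / 2) := by
  choose w hw using fun (S : {S : Finset (Fin n) // S.card = m}) j =>
    (hdeg j).exists_comp_eq_dotProduct (S.1.orderEmbOfFin S.2).toEmbedding
  calc _ ≤ Fintype.card {A : Finset (Fin n) // A.card ≤ 1 + d / 2} :=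
        psdRank_le_card_of_eq_sum_sq _ w (monomialVec _) fun S x => by
          simp only [hsum, restrict_of_card_eq S.2, hw]
    _ ≤ 1 + n ^ (1 + d / 2) := by
        simpa using Fintype.card_finset_card_le (α := Fin n) (1 + d / 2)

/-- If `f : {0,1}^m → ℝ_{≥0}` has a sum-of-squares certificate of degree
`d+2` (i.e. `f = ∑_j g_j²` with `deg(g_j) ≤ 1 + d/2`), then for all `n ≥ m` the matrix
`M_n^f(S,x) = f(x_S)`, indexed by `m`-subsets `S ⊆ [n]` and `x ∈ {0,1}^n`, has psd rank
at most `1 + n^{1+d/2}`. -/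
theorem stmt17 (m n d : ℕ) (hmn : m ≤ n)
    (f : (Fin m → Bool) → ℝ) (hf : ∀ x, 0 ≤ f x)
    (t : ℕ) (g : Fin t → (Fin m → Bool) → ℝ)
    (hdeg : ∀ j, HasDegLE m (1 + d / 2) (g j))
    (hsum : ∀ x, f x = ∑ j, (g j x) ^ 2) :
    PsdRank (fun (S : {S : Finset (Fin n) // S.card = m}) (x : Fin n → Bool) =>
        f (restrict m n S.1 x)) ≤ 1 + n ^ (1 + d / 2) :=
  stmt17_general m n d f t g hdeg hsum
end
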